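/- arXiv:1311.2181 — 7 statements merged into one kernel-verified Lean document; each statement's English description precedes it below -/
import Mathlib

section
/- Suppose Assumption A4 is satisfied. Then diam(𝓛) < 1 if and only if there exist δ > 0 and T > 0 such that for every t0 ≥ 0 the graph G([t0, t0+T], δ) has a spanning tree (i.e., the system has a δ-spanning tree across every T-length time interval). -/
/-!
If every window `[t0, t0 + T]` carries a spanning tree of `G([t0, t0 + T], δ)`: the evolution
matrices `V t s` are row stochastic, and over a window of length `T` their diagonal is at least
`e^{-M₁T}` and their entries along edges are at least `δ e^{-M₁T}`. While the sets of heavy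
columns of two rows are disjoint, each further window adds a column to one of them (the tree has an
edge entering the set that misses its root), so `V (t0 + mT) t0` is scrambling, and Hajnal's
inequality makes `diam V (t + t0) t0` decay geometrically in `t`.

Conversely, if a window `[t0, t0 + T]` has no spanning tree for `δ = e^{-mM₁T} / (4m²)`, there are
two disjoint nonempty vertex sets without incoming edges; by Gronwall the corresponding rows of
`V (t0 + T) t0` keep three quarters of their mass inside their own set, so `diam V (T + t0) t0 ≥ 1`
for every `T > 0`.
-/

open Filter MeasureTheory Matrix Topology
open scoped ENNReal

section Hajnal

open Finset

variable {ι κ : Type*} [Fintype κ]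

noncomputable def hajnalDiam (Q : Matrix ι κ ℝ) : ℝ := ⨆ i, ⨆ j, ∑ k, |Q i k - Q j k|

def IsScrambling (η : ℝ) (P : Matrix ι κ ℝ) : Prop := ∀ a b, ∃ k, η ≤ P a k ∧ η ≤ P b k

theorem sum_abs_sub_le_hajnalDiam [Finite ι] (Q : Matrix ι κ ℝ) (i j : ι) :
    ∑ k, |Q i k - Q j k| ≤ hajnalDiam Q :=
  (le_ciSup (Set.finite_range _).bddAbove j).trans
    (le_ciSup (f := fun i => ⨆ j, ∑ k, |Q i k - Q j k|) (Set.finite_range _).bddAbove i)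

theorem hajnalDiam_le {Q : Matrix ι κ ℝ} {D : ℝ} (h : ∀ i j, ∑ k, |Q i k - Q j k| ≤ D)
    (hD : 0 ≤ D) : hajnalDiam Q ≤ D :=
  Real.iSup_le (fun i => Real.iSup_le (h i) hD) hD

theorem hajnalDiam_nonneg (Q : Matrix ι κ ℝ) : 0 ≤ hajnalDiam Q :=
  Real.iSup_nonneg fun _ => Real.iSup_nonneg fun _ => sum_nonneg fun _ _ => abs_nonneg _

/-- The paper's `diam(𝓛)`. -/
noncomputable def asymptoticHajnalDiam (V : ℝ → ℝ → Matrix ι κ ℝ) : ℝ≥0∞ :=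
  limsup (fun t : ℝ => ⨆ t0 : {x : ℝ // 0 ≤ x},
    ENNReal.ofReal (hajnalDiam (V (t + t0) t0)) ^ (1 / t)) atTop

variable [Fintype ι]

theorem sum_abs_vecMul_sub_le_of_sum_eq {α β : ι → ℝ} (hα : 0 ≤ α) (hβ : 0 ≤ β)
    (hαβ : ∑ k, α k = ∑ k, β k) (Q : Matrix ι κ ℝ) :
    ∑ l, |(α ᵥ* Q) l - (β ᵥ* Q) l| ≤ (∑ k, α k) * hajnalDiam Q := by
  set s := ∑ k, α k
  rcases (sum_nonneg fun k _ => hα k : 0 ≤ s).eq_or_lt with hs0 | hs0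
  · have hα0 : α = 0 := funext fun k => (sum_eq_zero_iff_of_nonneg fun k _ => hα k).1 hs0.symm k
      (mem_univ k)
    have hβ0 : β = 0 := funext fun k =>
      (sum_eq_zero_iff_of_nonneg fun k _ => hβ k).1 (hαβ.symm.trans hs0.symm) k (mem_univ k)
    simp [hα0, hβ0, s]
  have hmix : ∀ l, s * ((α ᵥ* Q) l - (β ᵥ* Q) l)
      = ∑ k, ∑ k', α k * β k' * (Q k l - Q k' l) := fun l => by
    calc s * ((α ᵥ* Q) l - (β ᵥ* Q) l)
        = (∑ k, α k * Q k l) * ∑ k', β k' - (∑ k, α k) * ∑ k', β k' * Q k' l := by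
          simp only [vecMul, dotProduct]; rw [← hαβ]; ring
      _ = _ := by
          rw [sum_mul_sum, sum_mul_sum, ← sum_sub_distrib]
          refine sum_congr rfl fun k _ => ?_
          rw [← sum_sub_distrib]
          exact sum_congr rfl fun k' _ => by ring
  refine le_of_mul_le_mul_left ?_ hs0
  calc s * ∑ l, |(α ᵥ* Q) l - (β ᵥ* Q) l|
      = ∑ l, |∑ k, ∑ k', α k * β k' * (Q k l - Q k' l)| := by
        rw [mul_sum]
        exact sum_congr rfl fun l _ => by rw [← hmix, abs_mul, abs_of_pos hs0]
    _ ≤ ∑ l, ∑ k, ∑ k', α k * β k' * |Q k l - Q k' l| := by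
        refine sum_le_sum fun l _ => (abs_sum_le_sum_abs _ _).trans <| sum_le_sum fun k _ =>
          (abs_sum_le_sum_abs _ _).trans_eq <| sum_congr rfl fun k' _ => ?_
        rw [abs_mul, abs_of_nonneg (mul_nonneg (hα k) (hβ k'))]
    _ = ∑ k, ∑ k', α k * β k' * ∑ l, |Q k l - Q k' l| := by
        rw [sum_comm]
        exact sum_congr rfl fun k _ => by rw [sum_comm]; simp only [mul_sum]
    _ ≤ ∑ k, ∑ k', α k * β k' * hajnalDiam Q := by
        gcongr with k _ k' _
        · exact mul_nonneg (hα k) (hβ k')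
        · exact sum_abs_sub_le_hajnalDiam Q k k'
    _ = (∑ k, α k) * ((∑ k', β k') * hajnalDiam Q) := by
        simp only [sum_mul, mul_sum, mul_assoc]; exact sum_comm
    _ = s * (s * hajnalDiam Q) := by rw [← hαβ]

/-- Hajnal's inequality for one pair of rows: `x - y` is the difference of the excesses of `x` and
`y` over `min x y`, each of mass at most `1 - η`. -/
theorem sum_abs_vecMul_sub_le {x y : ι → ℝ} (hx : 0 ≤ x) (hy : 0 ≤ y) (hx1 : ∑ k, x k = 1)
    (hy1 : ∑ k, y k = 1) {η : ℝ} (hη : ∃ k, η ≤ x k ∧ η ≤ y k) (Q : Matrix ι κ ℝ) :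
    ∑ l, |(x ᵥ* Q) l - (y ᵥ* Q) l| ≤ (1 - η) * hajnalDiam Q := by
  set μ : ι → ℝ := fun k => min (x k) (y k)
  have hxy : ∀ l, (x ᵥ* Q) l - (y ᵥ* Q) l = ((x - μ) ᵥ* Q) l - ((y - μ) ᵥ* Q) l := fun l => by
    simp only [sub_vecMul, Pi.sub_apply]; ring
  have hμ : η ≤ ∑ k, μ k := by
    obtain ⟨k, hxk, hyk⟩ := hη
    exact (le_min hxk hyk).trans (single_le_sum (fun k _ => le_min (hx k) (hy k)) (mem_univ k))
  simp only [hxy]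
  calc _ ≤ (∑ k, (x - μ) k) * hajnalDiam Q :=
        sum_abs_vecMul_sub_le_of_sum_eq (fun k => sub_nonneg.2 (min_le_left _ _))
          (fun k => sub_nonneg.2 (min_le_right _ _))
          (by simp only [sum_sub_distrib, hx1, hy1]) Q
    _ ≤ (1 - η) * hajnalDiam Q := by
        gcongr
        · exact hajnalDiam_nonneg Q
        · simp only [Pi.sub_apply, sum_sub_distrib, hx1]; linarith

theorem two_sub_le_sum_abs_sub [DecidableEq ι] {x y : ι → ℝ} (hx : ∑ k, x k = 1)
    (hy : ∑ k, y k = 1) (s : Finset ι) :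
    2 - 2 * ∑ k ∈ sᶜ, x k - 2 * ∑ k ∈ s, y k ≤ ∑ k, |x k - y k| := by
  have h1 : ∑ k ∈ s, (x k - y k) ≤ ∑ k ∈ s, |x k - y k| := sum_le_sum fun k _ => le_abs_self _
  have h2 : ∑ k ∈ sᶜ, (y k - x k) ≤ ∑ k ∈ sᶜ, |x k - y k| :=
    sum_le_sum fun k _ => abs_sub_comm (x k) (y k) ▸ le_abs_self _
  rw [sum_sub_distrib] at h1 h2
  rw [← sum_add_sum_compl s fun k => |x k - y k|]
  linarith [sum_add_sum_compl s x, sum_add_sum_compl s y]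

variable [DecidableEq ι]

theorem hajnalDiam_le_two {P : Matrix ι ι ℝ} (hP : P ∈ rowStochastic ℝ ι) :
    hajnalDiam P ≤ 2 := by
  refine hajnalDiam_le (fun i j => ?_) zero_le_two
  calc ∑ k, |P i k - P j k| ≤ ∑ k, (P i k + P j k) :=
        sum_le_sum fun k _ => (abs_sub _ _).trans <| by
          rw [abs_of_nonneg (hP.1 i k), abs_of_nonneg (hP.1 j k)]
    _ = 2 := by
        rw [sum_add_distrib, sum_row_of_mem_rowStochastic hP, sum_row_of_mem_rowStochastic hP]
        norm_num

theorem hajnalDiam_mul_le {P : Matrix ι ι ℝ} (hP : P ∈ rowStochastic ℝ ι) {η : ℝ}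
    (hscr : IsScrambling η P) (Q : Matrix ι κ ℝ) :
    hajnalDiam (P * Q) ≤ (1 - η) * hajnalDiam Q := by
  rcases isEmpty_or_nonempty ι with hι | ⟨⟨a⟩⟩
  · simp [hajnalDiam]
  have hη : η ≤ 1 := by
    obtain ⟨k, hk, -⟩ := hscr a a
    exact hk.trans (le_one_of_mem_rowStochastic hP)
  refine hajnalDiam_le (fun i j => ?_) (mul_nonneg (by linarith) (hajnalDiam_nonneg Q))
  exact sum_abs_vecMul_sub_le (hP.1 i) (hP.1 j)
    (sum_row_of_mem_rowStochastic hP i) (sum_row_of_mem_rowStochastic hP j) (hscr i j) Q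

end Hajnal


section Graphs

open Finset

variable {ι : Type*} {e : ι → ι → Prop}

def HasSpanningTree (e : ι → ι → Prop) : Prop := ∃ r, ∀ i, Relation.ReflTransGen e r i

/-- The graph `G([t1, t2], δ)` of the paper. -/
def deltaGraph (L : ℝ → Matrix ι ι ℝ) (δ t1 t2 : ℝ) (j i : ι) : Prop :=
  δ < ∫ τ in t1..t2, L τ i j

theorem exists_rel_of_reflTransGen {r a : ι} (h : Relation.ReflTransGen e r a) {U : Set ι}
    (ha : a ∈ U) (hr : r ∉ U) : ∃ k l, k ∉ U ∧ l ∈ U ∧ e k l := by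
  induction h with
  | refl => exact absurd ha hr
  | @tail b c _ hbc ih =>
    by_cases hb : b ∈ U
    · exact ih hb
    · exact ⟨b, c, hb, ha, hbc⟩

/-- Take `x` with the fewest ancestors and `i` not reachable from `x`: by minimality every ancestor
of `x` has `x` as an ancestor, so the ancestor sets of `x` and `i` are disjoint. -/
theorem exists_disjoint_ancestorClosed_of_not_hasSpanningTree [Fintype ι] [Nonempty ι]
    (h : ¬ HasSpanningTree e) :
    ∃ A B : Finset ι, A.Nonempty ∧ B.Nonempty ∧ Disjoint A B ∧
      (∀ x ∈ A, ∀ j, e j x → j ∈ A) ∧ (∀ x ∈ B, ∀ j, e j x → j ∈ B) := by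
  classical
  let anc : ι → Finset ι := fun i => {j | Relation.ReflTransGen e j i}
  have mem_anc : ∀ i j, j ∈ anc i ↔ Relation.ReflTransGen e j i := fun i j => by simp [anc]
  have closed : ∀ i, ∀ x ∈ anc i, ∀ j, e j x → j ∈ anc i := fun i x hx j hj =>
    (mem_anc i j).2 (.head hj ((mem_anc i x).1 hx))
  obtain ⟨x, -, hx⟩ := exists_min_image univ (fun i => #(anc i)) univ_nonempty
  obtain ⟨i, hi⟩ := not_forall.1 (not_exists.1 h x)
  refine ⟨anc x, anc i, ⟨x, (mem_anc x x).2 .refl⟩, ⟨i, (mem_anc i i).2 .refl⟩, ?_,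
    closed x, closed i⟩
  refine disjoint_left.2 fun y hyx hyi => hi ?_
  have hsub : anc y ⊆ anc x := fun j hj =>
    (mem_anc x j).2 (((mem_anc y j).1 hj).trans ((mem_anc x y).1 hyx))
  have hxy : x ∈ anc y := eq_of_subset_of_card_le hsub (hx y (mem_univ y)) ▸ (mem_anc x x).2 .refl
  exact ((mem_anc y x).1 hxy).trans ((mem_anc i y).1 hyi)

theorem card_lt_card_of_reflTransGen {r : ι} (hr : ∀ i, Relation.ReflTransGen e r i)
    {U U' : Finset ι} (hrU : r ∉ U) (hU : U.Nonempty) (hUU' : U ⊆ U')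
    (hU' : ∀ k, ∀ l ∈ U, e k l → k ∈ U') : #U < #U' := by
  obtain ⟨a, ha⟩ := hU
  obtain ⟨k, l, hk, hl, hkl⟩ := exists_rel_of_reflTransGen (hr a) (U := U) ha hrU
  exact card_lt_card ((ssubset_iff_of_subset hUU').2 ⟨k, hU' k l hl hkl, hk⟩)

theorem card_add_card_lt_of_hasSpanningTree (hroot : HasSpanningTree e)
    {U U' W W' : Finset ι} (hUW : Disjoint U W) (hU : U.Nonempty) (hW : W.Nonempty)
    (hUU' : U ⊆ U') (hWW' : W ⊆ W')
    (hU' : ∀ k, ∀ l ∈ U, e k l → k ∈ U') (hW' : ∀ k, ∀ l ∈ W, e k l → k ∈ W') :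
    #U + #W < #U' + #W' := by
  obtain ⟨r, hr⟩ := hroot
  by_cases hrU : r ∈ U
  · have := card_lt_card_of_reflTransGen hr (disjoint_left.1 hUW hrU) hW hWW' hW'
    have := card_le_card hUU'
    omega
  · have := card_lt_card_of_reflTransGen hr hrU hU hUU' hU'
    have := card_le_card hWW'
    omega

end Graphs


section RealAnalysis

open Set Real

theorem le_exp_mul_mul_add_integral_of_hasDerivAt {g g' ρ : ℝ → ℝ} {K a b : ℝ} (hab : a ≤ b)
    (hg : ∀ t ∈ Icc a b, HasDerivAt g (g' t) t) (hρ : IntegrableOn ρ (Icc a b))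
    (hle : ∀ t ∈ Ioo a b, g' t ≤ K * g t + exp (K * (t - a)) * ρ t) :
    g b ≤ exp (K * (b - a)) * (g a + ∫ t in a..b, ρ t) := by
  have hderiv : ∀ t ∈ Icc a b, HasDerivAt (fun t => exp (-K * (t - a)) * g t)
      (exp (-K * (t - a)) * (g' t - K * g t)) t := fun t ht =>
    ((((hasDerivAt_id' t).sub_const a).const_mul (-K)).exp.fun_mul (hg t ht)).congr_deriv
      (by ring)
  have key := intervalIntegral.sub_le_integral_of_hasDeriv_right_of_le hab
    (fun t ht => (hderiv t ht).continuousAt.continuousWithinAt)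
    (fun t ht => (hderiv t (Ioo_subset_Icc_self ht)).hasDerivWithinAt) hρ
    (fun t ht => by
      have h := mul_le_mul_of_nonneg_left (sub_le_iff_le_add'.2 (hle t ht))
        (exp_pos (-K * (t - a))).le
      rwa [← mul_assoc, ← exp_add, show -K * (t - a) + K * (t - a) = 0 by ring, exp_zero,
        one_mul] at h)
  simp only [sub_self, mul_zero, exp_zero, one_mul] at key
  have := mul_le_mul_of_nonneg_left (sub_le_iff_le_add'.1 key) (exp_pos (K * (b - a))).le
  rwa [← mul_assoc, ← exp_add, show K * (b - a) + -K * (b - a) = 0 by ring, exp_zero,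
    one_mul] at this

theorem exp_mul_mul_add_integral_le_of_hasDerivAt {g g' ρ : ℝ → ℝ} {K a b : ℝ} (hab : a ≤ b)
    (hg : ∀ t ∈ Icc a b, HasDerivAt g (g' t) t) (hρ : IntegrableOn ρ (Icc a b))
    (hle : ∀ t ∈ Ioo a b, K * g t + exp (K * (t - a)) * ρ t ≤ g' t) :
    exp (K * (b - a)) * (g a + ∫ t in a..b, ρ t) ≤ g b := by
  have := le_exp_mul_mul_add_integral_of_hasDerivAt (g := -g) (g' := -g') (ρ := -ρ) (K := K) hab
    (fun t ht => (hg t ht).neg) hρ.neg (fun t ht => by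
      simp only [Pi.neg_apply]; linarith [hle t ht])
  simp only [Pi.neg_apply, intervalIntegral.integral_neg] at this
  linarith

theorem HasDerivAt.eventually_nhdsGT_lt {f : ℝ → ℝ} {f' x : ℝ} (hf : HasDerivAt f f' x)
    (hf' : 0 < f') : ∀ᶠ y in 𝓝[>] x, f x < f y := by
  have hslope := (hasDerivAt_iff_tendsto_slope.1 hf).mono_left (nhdsGT_le_nhdsNE x)
  filter_upwards [hslope.eventually (lt_mem_nhds hf'), self_mem_nhdsWithin] with y hy hxy
  rw [slope_def_field] at hy
  exact sub_pos.1 ((div_pos_iff_of_pos_right (sub_pos.2 hxy)).1 hy)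

theorem nonneg_of_hasDerivAt_pos_of_eq_zero {ι : Type*} [Finite ι] {z z' : ℝ → ι → ℝ} {a b : ℝ}
    (hz : ∀ t ∈ Icc a b, ∀ k, HasDerivAt (fun s => z s k) (z' t k) t) (ha : 0 ≤ z a)
    (hpos : ∀ t ∈ Ico a b, 0 ≤ z t → ∀ k, z t k = 0 → 0 < z' t k) :
    ∀ t ∈ Icc a b, 0 ≤ z t := by
  have hcont : ContinuousOn z (Icc a b) :=
    continuousOn_pi.2 fun k t ht => (hz t ht k).continuousAt.continuousWithinAt
  have hclosed : IsClosed ({t | 0 ≤ z t} ∩ Icc a b) := by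
    rw [inter_comm]
    exact hcont.preimage_isClosed_of_isClosed isClosed_Icc isClosed_Ici
  refine fun t ht => hclosed.Icc_subset_of_forall_mem_nhdsWithin ha ?_ ht
  rintro x ⟨hx, hxI⟩
  have hx' : 0 ≤ z x := hx
  suffices ∀ k, ∀ᶠ y in 𝓝[>] x, 0 ≤ z y k from (eventually_all.2 this).mono fun y hy => hy
  intro k
  have hzk := hz x (Ico_subset_Icc_self hxI) k
  rcases (hx' k).lt_or_eq with hk | hk
  · exact (hzk.continuousAt.eventually (lt_mem_nhds hk)).filter_mono nhdsWithin_le_nhds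
      |>.mono fun y hy => hy.le
  · exact (hzk.eventually_nhdsGT_lt (hpos x hxI hx' k hk.symm)).mono fun y hy =>
      (hk.trans_lt hy).le

theorem limsup_ofReal_mul_pow_floor_rpow_lt_one {C q S : ℝ} (hC : 0 < C) (hq0 : 0 < q)
    (hq1 : q < 1) (hS : 0 < S) :
    limsup (fun t : ℝ => ENNReal.ofReal (C * q ^ ⌊t / S⌋₊) ^ (1 / t)) atTop < 1 := by
  have h0 : Tendsto (fun t : ℝ => 1 / t) atTop (𝓝 0) := by
    simpa only [one_div] using tendsto_inv_atTop_zero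
  have hlim : Tendsto (fun t : ℝ => C ^ (1 / t) * q ^ (1 / S - 1 / t)) atTop (𝓝 (q ^ (1 / S))) := by
    simpa using (tendsto_const_nhds.rpow h0 (.inl hC.ne')).mul
      (tendsto_const_nhds.rpow (tendsto_const_nhds.sub h0) (.inl hq0.ne'))
  have hle : ∀ᶠ t in atTop, ENNReal.ofReal (C * q ^ ⌊t / S⌋₊) ^ (1 / t)
      ≤ ENNReal.ofReal (C ^ (1 / t) * q ^ (1 / S - 1 / t)) := by
    filter_upwards [eventually_gt_atTop 0] with t ht
    rw [ENNReal.ofReal_rpow_of_pos (by positivity)]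
    refine ENNReal.ofReal_le_ofReal ?_
    calc (C * q ^ ⌊t / S⌋₊) ^ (1 / t) ≤ (C * q ^ (t / S - 1)) ^ (1 / t) := by
          refine rpow_le_rpow (by positivity) (mul_le_mul_of_nonneg_left ?_ hC.le) (by positivity)
          rw [← rpow_natCast]
          exact rpow_le_rpow_of_exponent_ge hq0 hq1.le (Nat.sub_one_lt_floor _).le
      _ = C ^ (1 / t) * q ^ (1 / S - 1 / t) := by
          rw [mul_rpow hC.le (by positivity), ← rpow_mul hq0.le]
          congr 2
          field_simp
  calc limsup _ atTop
        ≤ limsup (fun t => ENNReal.ofReal (C ^ (1 / t) * q ^ (1 / S - 1 / t))) atTop :=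
        limsup_le_limsup hle
    _ = ENNReal.ofReal (q ^ (1 / S)) := (ENNReal.tendsto_ofReal hlim).limsup_eq
    _ < 1 := ENNReal.ofReal_lt_one.2 (rpow_lt_one hq0.le hq1 (by positivity))

end RealAnalysis

section LinearODE

open Set Finset

variable {ι : Type*} [Fintype ι]

theorem norm_mulVec_le_of_abs_le {A : Matrix ι ι ℝ} {M : ℝ} (hM : 0 ≤ M)
    (hA : ∀ i j, |A i j| ≤ M) (x : ι → ℝ) : ‖A *ᵥ x‖ ≤ Fintype.card ι * M * ‖x‖ := by
  refine (pi_norm_le_iff_of_nonneg (by positivity)).2 fun i => ?_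
  calc ‖(A *ᵥ x) i‖ ≤ ∑ k, ‖A i k * x k‖ := norm_sum_le _ _
    _ ≤ ∑ _k : ι, M * ‖x‖ := sum_le_sum fun k _ => by
        rw [norm_mul, Real.norm_eq_abs]
        exact mul_le_mul (hA i k) (norm_le_pi_norm x k) (norm_nonneg _) hM
    _ = Fintype.card ι * M * ‖x‖ := by rw [sum_const, card_univ, nsmul_eq_mul, mul_assoc]

theorem eqOn_of_hasDerivAt_mulVec {A : ℝ → Matrix ι ι ℝ} {M a b : ℝ} (hM : 0 ≤ M)
    (hA : ∀ t ∈ Ico a b, ∀ i j, |A t i j| ≤ M) {u w : ℝ → ι → ℝ}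
    (hu : ∀ t ∈ Icc a b, HasDerivAt u (A t *ᵥ u t) t)
    (hw : ∀ t ∈ Icc a b, HasDerivAt w (A t *ᵥ w t) t) (h : u a = w a) :
    EqOn u w (Icc a b) := by
  have hlip : ∀ t ∈ Ico a b, LipschitzOnWith ⟨Fintype.card ι * M, by positivity⟩
      (fun x => A t *ᵥ x) univ := fun t ht =>
    (LipschitzWith.of_dist_le_mul fun x y => by
      rw [dist_eq_norm, dist_eq_norm, ← mulVec_sub]
      exact norm_mulVec_le_of_abs_le hM (hA t ht) (x - y)).lipschitzOnWith
  exact ODE_solution_unique_of_mem_Icc_right hlip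
    (fun t ht => (hu t ht).continuousAt.continuousWithinAt)
    (fun t ht => (hu t (Ico_subset_Icc_self ht)).hasDerivWithinAt) (fun _ _ => mem_univ _)
    (fun t ht => (hw t ht).continuousAt.continuousWithinAt)
    (fun t ht => (hw t (Ico_subset_Icc_self ht)).hasDerivWithinAt) (fun _ _ => mem_univ _) h

theorem sum_mul_le_of_offDiag_nonneg {A : Matrix ι ι ℝ} {i : ι} (hA : ∀ j, i ≠ j → 0 ≤ A i j)
    {v : ι → ℝ} (hv : 0 ≤ v) {s : Finset ι} (hi : i ∈ s) :
    ∑ l ∈ s, A i l * v l ≤ ∑ l, A i l * v l :=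
  sum_le_sum_of_subset_of_nonneg (subset_univ s) fun l _ hl =>
    mul_nonneg (hA l fun h => hl (h ▸ hi)) (hv l)

theorem sum_sum_mul_le_of_offDiag_nonneg [DecidableEq ι] {A : Matrix ι ι ℝ} {M : ℝ} (hM : 0 ≤ M)
    (hoff : ∀ i j, i ≠ j → 0 ≤ A i j) (hA : ∀ i j, |A i j| ≤ M) {φ : ι → ℝ} (hφ0 : 0 ≤ φ)
    (hφ1 : φ ≤ 1) (S : Finset ι) :
    ∑ a ∈ S, ∑ l, A a l * φ l
      ≤ Fintype.card ι * M * ∑ a ∈ S, φ a + ∑ a ∈ S, ∑ l ∈ Sᶜ, A a l := by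
  have hrow : ∀ a ∈ S, ∑ l, A a l * φ l ≤ M * ∑ l ∈ S, φ l + ∑ l ∈ Sᶜ, A a l := by
    intro a ha
    rw [← sum_add_sum_compl S, mul_sum]
    exact add_le_add
      (sum_le_sum fun l _ => mul_le_mul_of_nonneg_right (le_of_abs_le (hA a l)) (hφ0 l))
      (sum_le_sum fun l hl =>
        mul_le_of_le_one_right (hoff a l fun h => Finset.mem_compl.1 hl (h ▸ ha)) (hφ1 l))
  calc ∑ a ∈ S, ∑ l, A a l * φ l ≤ ∑ a ∈ S, (M * ∑ l ∈ S, φ l + ∑ l ∈ Sᶜ, A a l) :=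
        sum_le_sum hrow
    _ = #S * M * ∑ a ∈ S, φ a + ∑ a ∈ S, ∑ l ∈ Sᶜ, A a l := by
        rw [sum_add_distrib, sum_const, nsmul_eq_mul, mul_assoc]
    _ ≤ _ := by
        gcongr
        · exact sum_nonneg fun a _ => hφ0 a
        · exact card_le_univ S

end LinearODE

noncomputable def heavyColumns {ι : Type*} [Fintype ι] (V : ℝ → ℝ → Matrix ι ι ℝ) (c T : ℝ)
    (r : ℕ) (s : ℝ) (a : ι) : Finset ι :=
  {k | c ^ r ≤ V (s + r * T) s a k}

theorem mem_heavyColumns {ι : Type*} [Fintype ι] {V : ℝ → ℝ → Matrix ι ι ℝ} {c T : ℝ} {r : ℕ}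
    {s : ℝ} {a k : ι} : k ∈ heavyColumns V c T r s a ↔ c ^ r ≤ V (s + r * T) s a k := by
  simp [heavyColumns]

section Evolution

open Set Real
open scoped Finset

variable {m : ℕ} {L : ℝ → Matrix (Fin m) (Fin m) ℝ} {V : ℝ → ℝ → Matrix (Fin m) (Fin m) ℝ}
  {M₁ : ℝ}
  (hoff : ∀ t, 0 ≤ t → ∀ i j, i ≠ j → 0 ≤ L t i j)
  (hrow : ∀ t, 0 ≤ t → ∀ i, ∑ j, L t i j = 0)
  (hbdd : ∀ t, 0 ≤ t → ∀ i j, |L t i j| ≤ M₁)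
  (hV0 : ∀ t0, 0 ≤ t0 → V t0 t0 = 1)
  (hVd : ∀ t0, 0 ≤ t0 → ∀ t ∈ Ici t0, ∀ i j,
      HasDerivAt (fun τ => V τ t0 i j) (∑ k, L t i k * V t t0 k j) t)
  (hmeas : ∀ i j, Measurable fun t => L t i j)

include hVd in
theorem hasDerivAt_evolution_mulVec {t0 t : ℝ} (ht0 : 0 ≤ t0) (ht : t0 ≤ t) (x : Fin m → ℝ) :
    HasDerivAt (fun τ => V τ t0 *ᵥ x) (L t *ᵥ (V t t0 *ᵥ x)) t := by
  refine hasDerivAt_pi.2 fun i => ?_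
  have := HasDerivAt.fun_sum (u := Finset.univ) fun k _ => (hVd t0 ht0 t ht i k).mul_const (x k)
  refine this.congr_deriv ?_
  simp only [mulVec, dotProduct, Finset.sum_mul, Finset.mul_sum, mul_assoc]
  exact Finset.sum_comm

include hbdd hV0 hVd in
theorem eq_evolution_mulVec (hM₁ : 0 ≤ M₁) {s t : ℝ} (hs : 0 ≤ s) (hst : s ≤ t)
    {u : ℝ → Fin m → ℝ} (hu : ∀ τ ∈ Icc s t, HasDerivAt u (L τ *ᵥ u τ) τ) :
    u t = V t s *ᵥ u s := by
  refine eqOn_of_hasDerivAt_mulVec (A := L) hM₁ (fun τ hτ => hbdd τ (hs.trans hτ.1)) hu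
    (fun τ hτ => hasDerivAt_evolution_mulVec hVd hs hτ.1 (u s)) ?_ ⟨hst, le_rfl⟩
  rw [hV0 s hs, one_mulVec]

include hrow hbdd hV0 hVd in
theorem evolution_mulVec_one (hM₁ : 0 ≤ M₁) {t0 t : ℝ} (ht0 : 0 ≤ t0) (ht : t0 ≤ t) :
    V t t0 *ᵥ 1 = 1 := by
  have hL : ∀ τ ∈ Icc t0 t, L τ *ᵥ 1 = 0 := fun τ hτ => funext fun i => by
    simpa [mulVec, dotProduct] using hrow τ (ht0.trans hτ.1) i
  refine (eq_evolution_mulVec hbdd hV0 hVd hM₁ ht0 ht (u := fun _ => 1) fun τ hτ => ?_).symm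
  rw [hL τ hτ]
  exact hasDerivAt_const τ 1

include hbdd hV0 hVd in
theorem evolution_mul (hM₁ : 0 ≤ M₁) {t0 s t : ℝ} (ht0 : 0 ≤ t0) (hs : t0 ≤ s) (hst : s ≤ t) :
    V t t0 = V t s * V s t0 :=
  ext_of_mulVec_single fun j => by
    rw [← mulVec_mulVec]
    exact eq_evolution_mulVec hbdd hV0 hVd hM₁ (ht0.trans hs) hst
      fun τ hτ => hasDerivAt_evolution_mulVec hVd ht0 (hs.trans hτ.1) _

include hoff hrow hV0 hVd in
theorem evolution_nonneg {t0 t : ℝ} (ht0 : 0 ≤ t0) (ht : t0 ≤ t) (i j : Fin m) :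
    0 ≤ V t t0 i j := by
  -- the perturbation `ε e^{τ - t0}` turns the invariance of `V ≥ 0` into a strict one
  have key : ∀ ε > 0, 0 ≤ V t t0 i j + ε * exp (t - t0) := by
    intro ε hε
    refine nonneg_of_hasDerivAt_pos_of_eq_zero (a := t0) (b := t)
      (z := fun τ k => V τ t0 k j + ε * exp (τ - t0))
      (z' := fun τ k => ∑ l, L τ k l * V τ t0 l j + ε * exp (τ - t0))
      (fun τ hτ k => ((hVd t0 ht0 τ hτ.1 k j).add
        (((hasDerivAt_id' τ).sub_const t0).exp.const_mul ε)).congr_deriv (by ring))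
      ?_ (fun τ hτ hz k hk => ?_) t ⟨ht, le_rfl⟩ i
    · intro k
      simp only [Pi.zero_apply, hV0 t0 ht0, one_apply, sub_self, exp_zero]
      split_ifs <;> linarith
    have hτ0 := ht0.trans hτ.1
    have hsum : ∑ l, L τ k l * V τ t0 l j
        = ∑ l, L τ k l * (V τ t0 l j + ε * exp (τ - t0)) := by
      simp only [mul_add, Finset.sum_add_distrib, ← Finset.sum_mul, hrow τ hτ0 k, zero_mul,
        add_zero]
    have := sum_mul_le_of_offDiag_nonneg (hoff τ hτ0 k) hz (Finset.mem_singleton_self k)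
    simp only [Finset.sum_singleton, hk, mul_zero] at this
    rw [hsum]
    positivity
  by_contra! hneg
  have := key (-V t t0 i j / (2 * exp (t - t0))) (div_pos (neg_pos.2 hneg) (by positivity))
  field_simp at this
  linarith

include hbdd hmeas in
theorem integrableOn_entry {a b : ℝ} (ha : 0 ≤ a) (i j : Fin m) :
    IntegrableOn (fun τ => L τ i j) (Icc a b) :=
  Measure.integrableOn_of_bounded (M := M₁) measure_Icc_lt_top.ne
    (hmeas i j).aestronglyMeasurable <| (ae_restrict_iff' measurableSet_Icc).2 <|
      Eventually.of_forall fun τ hτ => (Real.norm_eq_abs _).trans_le (hbdd τ (ha.trans hτ.1) i j)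

include hoff hrow hbdd hV0 hVd in
theorem exp_neg_le_evolution_diag {t0 t : ℝ} (ht0 : 0 ≤ t0) (ht : t0 ≤ t) (i : Fin m) :
    exp (-(M₁ * (t - t0))) ≤ V t t0 i i := by
  have := exp_mul_mul_add_integral_le_of_hasDerivAt (K := -M₁) (ρ := 0) ht
    (fun τ hτ => hVd t0 ht0 τ hτ.1 i i) integrableOn_zero fun τ hτ => by
      have hτ0 := ht0.trans hτ.1.le
      have hV := evolution_nonneg hoff hrow hV0 hVd ht0 hτ.1.le
      have := sum_mul_le_of_offDiag_nonneg (hoff τ hτ0 i) (fun l => hV l i)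
        (Finset.mem_singleton_self i)
      rw [Finset.sum_singleton] at this
      have hii := mul_le_mul_of_nonneg_right (neg_le_of_abs_le (hbdd τ hτ0 i i)) (hV i i)
      simp only [Pi.zero_apply, mul_zero, add_zero]
      linarith
  simpa [hV0 t0 ht0] using this

include hoff hrow hbdd hV0 hVd hmeas in
theorem exp_neg_mul_integral_le_evolution {t0 t : ℝ} (ht0 : 0 ≤ t0) (ht : t0 ≤ t) {i j : Fin m}
    (hij : i ≠ j) : exp (-(M₁ * (t - t0))) * ∫ τ in t0..t, L τ i j ≤ V t t0 i j := by
  have := exp_mul_mul_add_integral_le_of_hasDerivAt (K := -M₁) ht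
    (fun τ hτ => hVd t0 ht0 τ hτ.1 i j) (integrableOn_entry hbdd hmeas ht0 i j) fun τ hτ => by
      have hτ0 := ht0.trans hτ.1.le
      have hV := evolution_nonneg hoff hrow hV0 hVd ht0 hτ.1.le
      have := sum_mul_le_of_offDiag_nonneg (hoff τ hτ0 i) (fun l => hV l j)
        (Finset.mem_insert_self i {j})
      rw [Finset.sum_pair hij] at this
      have hjj := mul_le_mul_of_nonneg_left
        (exp_neg_le_evolution_diag hoff hrow hbdd hV0 hVd ht0 hτ.1.le j) (hoff τ hτ0 i j hij)
      have hii := mul_le_mul_of_nonneg_right (neg_le_of_abs_le (hbdd τ hτ0 i i)) (hV i j)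
      simp only [neg_mul] at hii ⊢
      linarith
  simpa [hV0 t0 ht0, one_apply_ne hij] using this

include hoff hrow hbdd hV0 hVd hmeas in
theorem min_mul_exp_le_evolution {δ T a : ℝ} (hT : 0 ≤ T) (ha : 0 ≤ a) {l k : Fin m}
    (h : l = k ∨ δ < ∫ τ in a..a + T, L τ l k) :
    min δ 1 * exp (-(M₁ * T)) ≤ V (a + T) a l k := by
  have haT : a ≤ a + T := le_add_of_nonneg_right hT
  have hT' : a + T - a = T := add_sub_cancel_left a T
  rcases eq_or_ne l k with rfl | hlk
  · calc min δ 1 * exp (-(M₁ * T)) ≤ 1 * exp (-(M₁ * T)) := by gcongr; exact min_le_right δ 1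
      _ ≤ V (a + T) a l l := by
        simpa only [one_mul, hT'] using exp_neg_le_evolution_diag hoff hrow hbdd hV0 hVd ha haT l
  · calc min δ 1 * exp (-(M₁ * T)) ≤ exp (-(M₁ * T)) * ∫ τ in a..a + T, L τ l k := by
          rw [mul_comm]; gcongr; exact (min_le_left δ 1).trans (h.resolve_left hlk).le
      _ ≤ V (a + T) a l k := by
        simpa only [hT'] using
          exp_neg_mul_integral_le_evolution hoff hrow hbdd hV0 hVd hmeas ha haT hlk

include hoff hrow hbdd hV0 hVd in
theorem evolution_mem_rowStochastic (hM₁ : 0 ≤ M₁) {t0 t : ℝ} (ht0 : 0 ≤ t0) (ht : t0 ≤ t) :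
    V t t0 ∈ rowStochastic ℝ (Fin m) :=
  ⟨evolution_nonneg hoff hrow hV0 hVd ht0 ht, evolution_mulVec_one hrow hbdd hV0 hVd hM₁ ht0 ht⟩

include hoff hrow hbdd hV0 hVd hmeas in
theorem mem_heavyColumns_succ (hM₁ : 0 ≤ M₁) {δ T s : ℝ} (hδ : 0 ≤ δ) (hT : 0 ≤ T) (hs : 0 ≤ s)
    {r : ℕ} {a k l : Fin m} (hl : l ∈ heavyColumns V (min δ 1 * exp (-(M₁ * T))) T r (s + T) a)
    (hkl : k = l ∨ deltaGraph L δ s (s + T) k l) :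
    k ∈ heavyColumns V (min δ 1 * exp (-(M₁ * T))) T (r + 1) s a := by
  rw [mem_heavyColumns] at hl ⊢
  have hsT : s ≤ s + T := le_add_of_nonneg_right hT
  have hsTr : s + T ≤ s + T + r * T := le_add_of_nonneg_right (by positivity)
  rw [show s + ((r + 1 : ℕ) : ℝ) * T = s + T + r * T by push_cast; ring,
    evolution_mul hbdd hV0 hVd hM₁ hs hsT hsTr, mul_apply, pow_succ]
  calc _ ≤ V (s + T + r * T) (s + T) a l * V (s + T) s l k :=
        mul_le_mul hl (min_mul_exp_le_evolution hoff hrow hbdd hV0 hVd hmeas hT hs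
          (hkl.imp Eq.symm id)) (by positivity) ((pow_nonneg (by positivity) r).trans hl)
    _ ≤ ∑ j, V (s + T + r * T) (s + T) a j * V (s + T) s j k :=
        Finset.single_le_sum (f := fun j => V (s + T + r * T) (s + T) a j * V (s + T) s j k)
          (fun j _ => mul_nonneg (evolution_nonneg hoff hrow hV0 hVd (by positivity) hsTr a j)
            (evolution_nonneg hoff hrow hV0 hVd hs hsT j k)) (Finset.mem_univ l)

include hoff hrow hbdd hV0 hVd hmeas in
theorem self_mem_heavyColumns (hM₁ : 0 ≤ M₁) {δ T : ℝ} (hδ : 0 ≤ δ) (hT : 0 ≤ T) (r : ℕ)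
    {s : ℝ} (hs : 0 ≤ s) (a : Fin m) :
    a ∈ heavyColumns V (min δ 1 * exp (-(M₁ * T))) T r s a := by
  induction r generalizing s with
  | zero => simp [mem_heavyColumns, hV0 s hs]
  | succ r ih =>
    exact mem_heavyColumns_succ hoff hrow hbdd hV0 hVd hmeas hM₁ hδ hT hs
      (ih (by positivity)) (.inl rfl)

include hoff hrow hbdd hV0 hVd hmeas in
/-- While the heavy columns of rows `a` and `b` stay disjoint, each new window adds at least one
heavy column to one of them: its spanning tree has an edge entering the side without the root. -/
theorem card_heavyColumns (hM₁ : 0 ≤ M₁) {δ T : ℝ} (hδ : 0 ≤ δ) (hT : 0 ≤ T)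
    (hroot : ∀ t0, 0 ≤ t0 → HasSpanningTree (deltaGraph L δ t0 (t0 + T))) (r : ℕ) {s : ℝ}
    (hs : 0 ≤ s) {a b : Fin m}
    (hab : Disjoint (heavyColumns V (min δ 1 * exp (-(M₁ * T))) T r s a)
      (heavyColumns V (min δ 1 * exp (-(M₁ * T))) T r s b)) :
    r + 2 ≤ #(heavyColumns V (min δ 1 * exp (-(M₁ * T))) T r s a)
      + #(heavyColumns V (min δ 1 * exp (-(M₁ * T))) T r s b) := by
  induction r generalizing s with
  | zero =>
    have := Finset.card_pos.2
      ⟨a, self_mem_heavyColumns hoff hrow hbdd hV0 hVd hmeas hM₁ hδ hT 0 hs a⟩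
    have := Finset.card_pos.2
      ⟨b, self_mem_heavyColumns hoff hrow hbdd hV0 hVd hmeas hM₁ hδ hT 0 hs b⟩
    omega
  | succ r ih =>
    have hsT : 0 ≤ s + T := by positivity
    have hsub : ∀ a, heavyColumns V (min δ 1 * exp (-(M₁ * T))) T r (s + T) a
        ⊆ heavyColumns V (min δ 1 * exp (-(M₁ * T))) T (r + 1) s a := fun a l hl =>
      mem_heavyColumns_succ hoff hrow hbdd hV0 hVd hmeas hM₁ hδ hT hs hl (.inl rfl)
    have hab' := hab.mono (hsub a) (hsub b)
    have := ih hsT hab'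
    have := card_add_card_lt_of_hasSpanningTree (hroot s hs) hab'
      ⟨a, self_mem_heavyColumns hoff hrow hbdd hV0 hVd hmeas hM₁ hδ hT r hsT a⟩
      ⟨b, self_mem_heavyColumns hoff hrow hbdd hV0 hVd hmeas hM₁ hδ hT r hsT b⟩ (hsub a) (hsub b)
      (fun k l hl h => mem_heavyColumns_succ hoff hrow hbdd hV0 hVd hmeas hM₁ hδ hT hs hl (.inr h))
      (fun k l hl h => mem_heavyColumns_succ hoff hrow hbdd hV0 hVd hmeas hM₁ hδ hT hs hl (.inr h))
    omega

include hoff hrow hbdd hV0 hVd hmeas in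
theorem isScrambling_evolution (hM₁ : 0 ≤ M₁) {δ T : ℝ} (hδ : 0 ≤ δ) (hT : 0 ≤ T)
    (hroot : ∀ t0, 0 ≤ t0 → HasSpanningTree (deltaGraph L δ t0 (t0 + T))) {t0 : ℝ} (ht0 : 0 ≤ t0) :
    IsScrambling ((min δ 1 * exp (-(M₁ * T))) ^ m) (V (t0 + m * T) t0) := by
  intro a b
  by_contra! h
  have hab : Disjoint (heavyColumns V (min δ 1 * exp (-(M₁ * T))) T m t0 a)
      (heavyColumns V (min δ 1 * exp (-(M₁ * T))) T m t0 b) :=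
    Finset.disjoint_left.2 fun k hka hkb =>
      ((h k (mem_heavyColumns.1 hka)).trans_le (mem_heavyColumns.1 hkb)).false
  have := card_heavyColumns hoff hrow hbdd hV0 hVd hmeas hM₁ hδ hT hroot m ht0 hab
  have := Finset.card_union_of_disjoint hab ▸ Finset.card_le_univ (_ ∪ _)
  simp only [Fintype.card_fin] at this
  omega

include hoff hrow hbdd hV0 hVd hmeas in
theorem hajnalDiam_evolution_le_pow (hM₁ : 0 ≤ M₁) {δ T : ℝ} (hδ : 0 ≤ δ) (hT : 0 ≤ T)
    (hroot : ∀ t0, 0 ≤ t0 → HasSpanningTree (deltaGraph L δ t0 (t0 + T))) {t0 : ℝ} (ht0 : 0 ≤ t0)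
    (N : ℕ) :
    hajnalDiam (V (t0 + N * (m * T)) t0) ≤ 2 * (1 - (min δ 1 * exp (-(M₁ * T))) ^ m) ^ N := by
  have hη : (min δ 1 * exp (-(M₁ * T))) ^ m ≤ 1 :=
    pow_le_one₀ (by positivity) (mul_le_one₀ (min_le_right δ 1) (by positivity)
      (exp_le_one_iff.2 (by nlinarith)))
  induction N with
  | zero =>
    simpa using
      hajnalDiam_le_two (evolution_mem_rowStochastic hoff hrow hbdd hV0 hVd hM₁ ht0 le_rfl)
  | succ N ih =>
    set s := t0 + N * (m * T)
    have hs : t0 ≤ s := le_add_of_nonneg_right (by positivity)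
    have hsS : s ≤ s + m * T := le_add_of_nonneg_right (by positivity)
    rw [show t0 + ((N + 1 : ℕ) : ℝ) * (m * T) = s + m * T by push_cast; ring,
      evolution_mul hbdd hV0 hVd hM₁ ht0 hs hsS, pow_succ', mul_left_comm]
    calc hajnalDiam (V (s + m * T) s * V s t0)
        ≤ (1 - (min δ 1 * exp (-(M₁ * T))) ^ m) * hajnalDiam (V s t0) :=
          hajnalDiam_mul_le
            (evolution_mem_rowStochastic hoff hrow hbdd hV0 hVd hM₁ (ht0.trans hs) hsS)
            (isScrambling_evolution hoff hrow hbdd hV0 hVd hmeas hM₁ hδ hT hroot (ht0.trans hs)) _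
      _ ≤ _ := by gcongr

include hoff hrow hbdd hV0 hVd hmeas in
theorem hajnalDiam_evolution_le_pow_floor (hM₁ : 0 ≤ M₁) (hm : 0 < m) {δ T : ℝ} (hδ : 0 ≤ δ)
    (hT : 0 < T) (hroot : ∀ t0, 0 ≤ t0 → HasSpanningTree (deltaGraph L δ t0 (t0 + T)))
    {t0 t : ℝ} (ht0 : 0 ≤ t0) (ht : 0 ≤ t) :
    hajnalDiam (V (t + t0) t0)
      ≤ 2 * (1 - (min δ 1 * exp (-(M₁ * T))) ^ m) ^ ⌊t / (m * T)⌋₊ := by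
  set s := t0 + ⌊t / (m * T)⌋₊ * (m * T)
  have hS : (0 : ℝ) < m * T := by positivity
  have hs : t0 ≤ s := le_add_of_nonneg_right (by positivity)
  have hst : s ≤ t + t0 := by
    linarith [(le_div_iff₀ hS).1 (Nat.floor_le (div_nonneg ht hS.le))]
  have hP := evolution_mem_rowStochastic hoff hrow hbdd hV0 hVd hM₁ (ht0.trans hs) hst
  rw [evolution_mul hbdd hV0 hVd hM₁ ht0 hs hst]
  calc hajnalDiam (V (t + t0) s * V s t0) ≤ (1 - 0) * hajnalDiam (V s t0) :=
        hajnalDiam_mul_le hP (fun a b => ⟨a, hP.1 a a, hP.1 b a⟩) _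
    _ ≤ _ := by
        rw [sub_zero, one_mul]
        exact hajnalDiam_evolution_le_pow hoff hrow hbdd hV0 hVd hmeas hM₁ hδ hT.le hroot ht0 _

include hbdd hmeas in
theorem integral_sum_sum_compl_le {δ T t0 : ℝ} (hδ : 0 ≤ δ) (hT : 0 ≤ T) (ht0 : 0 ≤ t0)
    {A : Finset (Fin m)} (hA : ∀ x ∈ A, ∀ j, deltaGraph L δ t0 (t0 + T) j x → j ∈ A) :
    ∫ τ in t0..(t0 + T), ∑ a ∈ A, ∑ l ∈ Aᶜ, L τ a l ≤ m ^ 2 * δ := by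
  have hII : ∀ f : ℝ → ℝ, IntegrableOn f (Icc t0 (t0 + T)) →
      IntervalIntegrable f volume t0 (t0 + T) := fun f hf =>
    IntegrableOn.intervalIntegrable (by rwa [uIcc_of_le (le_add_of_nonneg_right hT)])
  rw [intervalIntegral.integral_finsetSum fun a _ => hII _ <|
    integrable_finsetSum _ fun l _ => integrableOn_entry hbdd hmeas ht0 a l]
  simp_rw [intervalIntegral.integral_finsetSum fun l _ => hII _ <|
    integrableOn_entry hbdd hmeas ht0 _ l]
  calc ∑ a ∈ A, ∑ l ∈ Aᶜ, ∫ τ in t0..(t0 + T), L τ a l ≤ ∑ a ∈ A, ∑ l ∈ Aᶜ, δ :=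
        Finset.sum_le_sum fun a ha => Finset.sum_le_sum fun l hl =>
          not_lt.1 fun h => Finset.mem_compl.1 hl (hA a ha l h)
    _ = #A * (#Aᶜ * δ) := by simp only [Finset.sum_const, nsmul_eq_mul]
    _ ≤ m * (m * δ) := by
        gcongr <;> exact_mod_cast (Finset.card_le_univ _).trans_eq (Fintype.card_fin m)
    _ = m ^ 2 * δ := by ring

include hoff hrow hbdd hV0 hVd hmeas in
/-- Gronwall: the mass `F` that the rows in `A` carry outside `A` satisfies `F t0 = 0` and
`F' ≤ m M₁ F + ∑_{a ∈ A, l ∉ A} L a l`, a sum whose integral is at most `m² δ`. -/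
theorem sum_compl_evolution_le (hM₁ : 0 ≤ M₁) {δ T t0 : ℝ} (hδ : 0 ≤ δ) (hT : 0 ≤ T)
    (ht0 : 0 ≤ t0) {A : Finset (Fin m)}
    (hA : ∀ x ∈ A, ∀ j, deltaGraph L δ t0 (t0 + T) j x → j ∈ A) {a : Fin m} (ha : a ∈ A) :
    ∑ k ∈ Aᶜ, V (t0 + T) t0 a k ≤ exp (m * M₁ * T) * (m ^ 2 * δ) := by
  set K : ℝ := m * M₁
  let φ : ℝ → Fin m → ℝ := fun τ l => ∑ k ∈ Aᶜ, V τ t0 l k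
  let F : ℝ → ℝ := fun τ => ∑ a ∈ A, φ τ a
  have hφ : ∀ τ, t0 ≤ τ → 0 ≤ φ τ ∧ φ τ ≤ 1 := fun τ hτ => by
    have hP := evolution_mem_rowStochastic hoff hrow hbdd hV0 hVd hM₁ ht0 hτ
    refine ⟨fun l => Finset.sum_nonneg fun k _ => hP.1 l k, fun l => ?_⟩
    exact (Finset.sum_le_sum_of_subset_of_nonneg (Finset.subset_univ _) fun k _ _ => hP.1 l k).trans
      (sum_row_of_mem_rowStochastic hP l).le
  have hF : ∀ τ ∈ Icc t0 (t0 + T), HasDerivAt F (∑ a ∈ A, ∑ l, L τ a l * φ τ l) τ :=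
    fun τ hτ => (HasDerivAt.fun_sum fun a _ => HasDerivAt.fun_sum fun k _ =>
      hVd t0 ht0 τ hτ.1 a k).congr_deriv <| Finset.sum_congr rfl fun a _ => by
        simp only [φ, Finset.mul_sum]
        exact Finset.sum_comm
  have hF' : ∀ τ ∈ Ioo t0 (t0 + T), ∑ a ∈ A, ∑ l, L τ a l * φ τ l
      ≤ K * F τ + exp (K * (τ - t0)) * ∑ a ∈ A, ∑ l ∈ Aᶜ, L τ a l := by
    intro τ hτ
    have hτ0 : 0 ≤ τ := ht0.trans hτ.1.le
    calc _ ≤ K * F τ + 1 * ∑ a ∈ A, ∑ l ∈ Aᶜ, L τ a l := by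
          simpa [K] using sum_sum_mul_le_of_offDiag_nonneg hM₁ (hoff τ hτ0) (hbdd τ hτ0)
            (hφ τ hτ.1.le).1 (hφ τ hτ.1.le).2 A
      _ ≤ _ := by
          gcongr
          · exact Finset.sum_nonneg fun a ha => Finset.sum_nonneg fun l hl =>
              hoff τ hτ0 a l fun h => Finset.mem_compl.1 hl (h ▸ ha)
          · exact one_le_exp (mul_nonneg (by positivity) (sub_nonneg.2 hτ.1.le))
  have hF0 : F t0 = 0 := Finset.sum_eq_zero fun a ha => Finset.sum_eq_zero fun k hk => by
    rw [hV0 t0 ht0, one_apply_ne fun h : a = k => Finset.mem_compl.1 hk (h ▸ ha)]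
  calc ∑ k ∈ Aᶜ, V (t0 + T) t0 a k ≤ F (t0 + T) :=
        Finset.single_le_sum (f := fun a => φ (t0 + T) a)
          (fun a _ => (hφ _ (le_add_of_nonneg_right hT)).1 a) ha
    _ ≤ exp (K * (t0 + T - t0)) * (F t0 + ∫ τ in t0..(t0 + T), ∑ a ∈ A, ∑ l ∈ Aᶜ, L τ a l) :=
        le_exp_mul_mul_add_integral_of_hasDerivAt (le_add_of_nonneg_right hT) hF
          (integrable_finsetSum _ fun a _ => integrable_finsetSum _ fun l _ =>
            integrableOn_entry hbdd hmeas ht0 a l) hF'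
    _ ≤ exp (m * M₁ * T) * (m ^ 2 * δ) := by
        rw [hF0, zero_add, add_sub_cancel_left]
        gcongr
        exact integral_sum_sum_compl_le hbdd hmeas hδ hT ht0 hA

include hoff hrow hbdd hV0 hVd hmeas in
theorem one_le_hajnalDiam_evolution (hM₁ : 0 ≤ M₁) (hm : 0 < m) {T t0 : ℝ} (hT : 0 ≤ T)
    (ht0 : 0 ≤ t0)
    (h : ¬ HasSpanningTree (deltaGraph L (exp (-(m * M₁ * T)) / (4 * m ^ 2)) t0 (t0 + T))) :
    1 ≤ hajnalDiam (V (T + t0) t0) := by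
  have : Nonempty (Fin m) := ⟨⟨0, hm⟩⟩
  have hm' : (0 : ℝ) < m := Nat.cast_pos.2 hm
  obtain ⟨A, B, ⟨a, ha⟩, ⟨b, hb⟩, hAB, hA, hB⟩ :=
    exists_disjoint_ancestorClosed_of_not_hasSpanningTree h
  have hmass : ∀ S : Finset (Fin m), (∀ x ∈ S, ∀ j,
      deltaGraph L (exp (-(m * M₁ * T)) / (4 * m ^ 2)) t0 (t0 + T) j x → j ∈ S) →
      ∀ x ∈ S, ∑ k ∈ Sᶜ, V (t0 + T) t0 x k ≤ 1 / 4 :=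
    fun S hS x hx => (sum_compl_evolution_le hoff hrow hbdd hV0 hVd hmeas hM₁ (by positivity) hT
      ht0 hS hx).trans_eq <| by
        rw [mul_div_left_comm, ← mul_assoc, ← exp_add, add_neg_cancel, exp_zero, one_mul]
        field_simp
  have hP := evolution_mem_rowStochastic hoff hrow hbdd hV0 hVd hM₁ ht0 (le_add_of_nonneg_right hT)
  have hbA : ∑ k ∈ A, V (t0 + T) t0 b k ≤ 1 / 4 :=
    (Finset.sum_le_sum_of_subset_of_nonneg (fun k hk => Finset.mem_compl.2
      (Finset.disjoint_left.1 hAB hk)) fun k _ _ => hP.1 b k).trans (hmass B hB b hb)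
  have := two_sub_le_sum_abs_sub (sum_row_of_mem_rowStochastic hP a)
    (sum_row_of_mem_rowStochastic hP b) A
  rw [add_comm T t0]
  linarith [hmass A hA a ha, sum_abs_sub_le_hajnalDiam (V (t0 + T) t0) a b]

include hoff hrow hbdd hV0 hVd hmeas in
theorem exists_hasSpanningTree_of_asymptoticHajnalDiam_lt_one (hM₁ : 0 ≤ M₁) (hm : 0 < m)
    (h : asymptoticHajnalDiam V < 1) :
    ∃ δ > (0 : ℝ), ∃ T > (0 : ℝ), ∀ t0, 0 ≤ t0 → HasSpanningTree (deltaGraph L δ t0 (t0 + T)) := by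
  by_contra! hno
  refine h.not_ge <| le_limsup_of_frequently_le <|
    ((eventually_gt_atTop 0).mono fun T hT => ?_).frequently
  have hm' : (0 : ℝ) < m := Nat.cast_pos.2 hm
  obtain ⟨t0, ht0, hnot⟩ :=
    hno (exp (-(m * M₁ * T)) / (4 * m ^ 2)) (div_pos (exp_pos _) (by positivity)) T hT
  calc (1 : ℝ≥0∞) = ENNReal.ofReal 1 ^ (1 / T) := by simp
    _ ≤ ENNReal.ofReal (hajnalDiam (V (T + t0) t0)) ^ (1 / T) := by
        gcongr
        exact one_le_hajnalDiam_evolution hoff hrow hbdd hV0 hVd hmeas hM₁ hm hT.le ht0 hnot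
    _ ≤ ⨆ t0 : {x : ℝ // 0 ≤ x}, ENNReal.ofReal (hajnalDiam (V (T + t0) t0)) ^ (1 / T) :=
        le_iSup (fun t0 : {x : ℝ // 0 ≤ x} => ENNReal.ofReal (hajnalDiam (V (T + t0) t0)) ^ (1 / T))
          ⟨t0, ht0⟩

include hoff hrow hbdd hV0 hVd hmeas in
theorem asymptoticHajnalDiam_lt_one_of_hasSpanningTree (hM₁ : 0 < M₁) (hm : 0 < m) {δ T : ℝ}
    (hδ : 0 < δ) (hT : 0 < T)
    (hroot : ∀ t0, 0 ≤ t0 → HasSpanningTree (deltaGraph L δ t0 (t0 + T))) :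
    asymptoticHajnalDiam V < 1 := by
  set c := min δ 1 * exp (-(M₁ * T))
  have hc0 : 0 < c := mul_pos (lt_min hδ one_pos) (exp_pos _)
  have hc1 : c < 1 := mul_lt_one_of_nonneg_of_lt_one_right (min_le_right δ 1) (exp_pos _).le
    (exp_lt_one_iff.2 (by nlinarith))
  refine (limsup_le_limsup ((eventually_gt_atTop 0).mono fun t ht => ?_)).trans_lt
    (limsup_ofReal_mul_pow_floor_rpow_lt_one two_pos (sub_pos.2 (pow_lt_one₀ hc0.le hc1 hm.ne'))
      (sub_lt_self _ (pow_pos hc0 m)) (by positivity : (0 : ℝ) < m * T))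
  refine iSup_le fun t0 => ?_
  gcongr
  exact hajnalDiam_evolution_le_pow_floor hoff hrow hbdd hV0 hVd hmeas hM₁.le hm hδ.le hT hroot
    t0.2 ht.le

end Evolution

/-- Theorem 3: under Assumption A4, the Hajnal diameter of the linear
system `u̇ = L(t)u`, namely
`diam(𝓛) = limsup_{t→∞} sup_{t0≥0} [diam(V(t+t0,t0))]^{1/t}` (computed in `ℝ≥0∞`
with `diam(V) = max_{i,j} Σ_k |v_ik − v_jk|`), satisfies `diam(𝓛) < 1` if and only
if there exist `δ > 0` and `T > 0` such that for every `t0 ≥ 0` the graph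
`G([t0,t0+T],δ)` (edge from `j` to `i` iff `∫_{t0}^{t0+T} l_ij > δ`) has a spanning
tree. -/
theorem stmt_2 (m : ℕ) (hm : 0 < m)
    (L : ℝ → Matrix (Fin m) (Fin m) ℝ) (M₁ : ℝ) (hM₁ : 0 < M₁)
    (hmeas : ∀ i j, Measurable fun t => L t i j)
    (hoff : ∀ t, 0 ≤ t → ∀ i j, i ≠ j → 0 ≤ L t i j)
    (hdiag : ∀ t, 0 ≤ t → ∀ i, L t i i = -∑ j ∈ ({i}ᶜ : Finset (Fin m)), L t i j)
    (hbdd : ∀ t, 0 ≤ t → ∀ i j, |L t i j| ≤ M₁)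
    (V : ℝ → ℝ → Matrix (Fin m) (Fin m) ℝ)
    (hV0 : ∀ t0, 0 ≤ t0 → V t0 t0 = 1)
    (hVd : ∀ t0, 0 ≤ t0 → ∀ t ∈ Set.Ici t0, ∀ i j,
        HasDerivAt (fun τ => V τ t0 i j) (∑ k, L t i k * V t t0 k j) t) :
    limsup (fun t : ℝ => ⨆ t0 : {x : ℝ // 0 ≤ x},
        (ENNReal.ofReal (⨆ i : Fin m, ⨆ j : Fin m,
            ∑ k, |V (t + t0) t0 i k - V (t + t0) t0 j k|)) ^ (1 / t)) atTop
        < 1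
      ↔ ∃ δ > (0:ℝ), ∃ T > (0:ℝ), ∀ t0, 0 ≤ t0 →
          ∃ r : Fin m, ∀ i : Fin m,
            Relation.ReflTransGen (fun a b => δ < ∫ τ in t0..(t0 + T), L τ b a) r i := by
  have hrow : ∀ t, 0 ≤ t → ∀ i, ∑ j, L t i j = 0 := fun t ht i => by
    rw [← Finset.sum_compl_add_sum {i}, Finset.sum_singleton, hdiag t ht i, add_neg_cancel]
  exact ⟨exists_hasSpanningTree_of_asymptoticHajnalDiam_lt_one hoff hrow hbdd hV0 hVd hmeas
      hM₁.le hm,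
    fun ⟨δ, hδ, T, hT, hroot⟩ => asymptoticHajnalDiam_lt_one_of_hasSpanningTree hoff hrow hbdd
      hV0 hVd hmeas hM₁ hm hδ hT hroot⟩
end

section
/- Under Assumption A1, let s : [t0,∞) → ℝ^n solve ṡ(t) = f(s(t)), let u : [t0,∞) → ℝ^n solve u̇(t) = Df(s(t))u(t) with u(t0) = u0, and let δx : [t0,∞) → ℝ^{nm} solve the variational equation δẋ(t) = DF^t(ŝ(t))δx(t) with δx(t0) = (u0,…,u0) ∈ ℝ^{nm} (i.e. 1_m ⊗ u0), where ŝ(t) = (s(t),…,s(t)). Then δx(t) = (u(t),…,u(t)) = 1_m ⊗ u(t) for all t ≥ t0. Consequently, the block row sums of the fundamental solution U(t,t0,s0) = (U_ij(t,t0,s0))_{i,j=1}^m of the variational equation satisfy Σ_{j=1}^m U_ij(t,t0,s0) = Ŭ(t,t0,s0) for every i, where Ŭ(t,t0,s0) is the fundamental solution of u̇ = Df(s(t))u with Ŭ(t0,t0,s0) = I_n. -/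
/-!
Differentiating `F^i(1_m ⊗ z, t) = f(z)` in `z` shows that `DF^t(ŝ)` maps `1_m ⊗ v` to
`1_m ⊗ Df(s) v`. Hence `1_m ⊗ u` solves the same linear variational equation as `δx` with the
same initial value, and uniqueness for linear ODEs whose coefficients are bounded along the
compact trajectory gives `δx = 1_m ⊗ u`. For the fundamental solutions, apply this to the block
row sums of the `c`-th column of `U`, which start at `1_m ⊗ e_c`, and to the `c`-th column of `Ŭ`.
-/

open Set

theorem LinearMap.pi_apply_eq_sum_univ_single {R M ι : Type*} [CommSemiring R] [AddCommMonoid M]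
    [Module R M] [Fintype ι] [DecidableEq ι] (L : (ι → R) →ₗ[R] M) (x : ι → R) :
    L x = ∑ i, x i • L (Pi.single i 1) := by
  conv_lhs => rw [← Finset.univ_sum_single x]
  refine (map_sum L _ _).trans (Finset.sum_congr rfl fun i _ => ?_)
  rw [← map_smul, ← Pi.single_smul', smul_eq_mul, mul_one]

theorem LinearMap.pi_pi_apply_eq_sum_univ_single {R M ι κ : Type*} [CommSemiring R]
    [AddCommMonoid M] [Module R M] [Fintype ι] [Fintype κ] [DecidableEq ι] [DecidableEq κ]
    (L : (ι → κ → R) →ₗ[R] M) (x : ι → κ → R) :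
    L x = ∑ p : ι × κ, x p.1 p.2 • L (Pi.single p.1 (Pi.single p.2 1)) := by
  conv_lhs => rw [← Finset.univ_sum_single x]
  simp only [map_sum, Fintype.sum_prod_type]
  refine Finset.sum_congr rfl fun i _ => ?_
  exact (L.comp (LinearMap.single R (fun _ => κ → R) i)).pi_apply_eq_sum_univ_single (x i)

theorem Matrix.sum_one_apply_prod {ι κ R : Type*} [Fintype ι] [DecidableEq ι] [DecidableEq κ]
    [AddCommMonoidWithOne R] (i : ι) (r c : κ) :
    ∑ j, (1 : Matrix (ι × κ) (ι × κ) R) (i, r) (j, c) = (1 : Matrix κ κ R) r c := by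
  simp [Matrix.one_apply, Prod.ext_iff, ite_and]

theorem fderiv_apply_eq_fderiv_diag_apply {𝕜 ι E G : Type*} [NontriviallyNormedField 𝕜]
    [Fintype ι] [NormedAddCommGroup E] [NormedSpace 𝕜 E] [NormedAddCommGroup G]
    [NormedSpace 𝕜 G] {g : (ι → E) → ι → G} {f : E → G} {i : ι}
    (hgf : ∀ z, g (fun _ => z) i = f z) {z : E} (hg : DifferentiableAt 𝕜 g fun _ => z)
    (v : E) : fderiv 𝕜 f z v = fderiv 𝕜 g (fun _ => z) (fun _ => v) i := by
  have hdiag : HasFDerivAt (fun z : E => fun _ : ι => z)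
      (ContinuousLinearMap.pi fun _ => ContinuousLinearMap.id 𝕜 E) z :=
    hasFDerivAt_pi.2 fun _ => hasFDerivAt_id z
  have := (hasFDerivAt_apply i _).comp z (hg.hasFDerivAt.comp z hdiag)
  rw [show f = (fun h => h i) ∘ g ∘ fun z _ => z from funext fun z => (hgf z).symm,
    this.fderiv]
  rfl

theorem ODE_solution_unique_of_mem_Icc_of_linear {E : Type*} [NormedAddCommGroup E]
    [NormedSpace ℝ E] {A : ℝ → E →L[ℝ] E} {x y : ℝ → E} {a b M : ℝ}
    (hA : ∀ τ ∈ Ico a b, ‖A τ‖ ≤ M)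
    (hx : ∀ τ ∈ Icc a b, HasDerivAt x (A τ (x τ)) τ)
    (hy : ∀ τ ∈ Icc a b, HasDerivAt y (A τ (y τ)) τ) (ha : x a = y a) :
    EqOn x y (Icc a b) := by
  have hlip : ∀ τ ∈ Ico a b, LipschitzOnWith M.toNNReal (A τ) univ := by
    intro τ hτ
    have hnorm : ‖A τ‖₊ ≤ M.toNNReal := by
      rw [← norm_toNNReal]
      exact Real.toNNReal_le_toNNReal (hA τ hτ)
    exact ((A τ).lipschitz.weaken hnorm).lipschitzOnWith
  exact ODE_solution_unique_of_mem_Icc_right hlip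
    (fun τ hτ => (hx τ hτ).continuousAt.continuousWithinAt)
    (fun τ hτ => (hx τ (Ico_subset_Icc_self hτ)).hasDerivWithinAt) (fun _ _ => mem_univ _)
    (fun τ hτ => (hy τ hτ).continuousAt.continuousWithinAt)
    (fun τ hτ => (hy τ (Ico_subset_Icc_self hτ)).hasDerivWithinAt) (fun _ _ => mem_univ _) ha

theorem variational_solution_eq_diag {ι E : Type*} [Fintype ι] [NormedAddCommGroup E]
    [NormedSpace ℝ E] {F : (ι → E) → ℝ → ι → E} {f : E → E}
    (hFf : ∀ (z : E) (t : ℝ), 0 ≤ t → ∀ i, F (fun _ => z) t i = f z)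
    (hF : ∀ t : ℝ, 0 ≤ t → Differentiable ℝ fun x => F x t)
    (hbound : ∀ K : Set (ι → E), IsCompact K →
      ∃ M : ℝ, ∀ t, 0 ≤ t → ∀ x ∈ K, ‖fderiv ℝ (fun y => F y t) x‖ ≤ M)
    {t0 : ℝ} (ht0 : 0 ≤ t0) {s : ℝ → E} (hs : ∀ t ∈ Ici t0, HasDerivAt s (f (s t)) t)
    {u : ℝ → E} {δx : ℝ → ι → E}
    (hu : ∀ t ∈ Ici t0, HasDerivAt u (fderiv ℝ f (s t) (u t)) t)
    (hδx : ∀ t ∈ Ici t0, HasDerivAt δx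
      (fun i => fderiv ℝ (fun x => F x t i) (fun _ => s t) (δx t)) t)
    (h0 : δx t0 = fun _ => u t0) :
    ∀ t ∈ Ici t0, δx t = fun _ => u t := by
  intro t ht
  set A : ℝ → (ι → E) →L[ℝ] (ι → E) := fun τ => fderiv ℝ (fun x => F x τ) fun _ => s τ
  have hdiag_cont : ContinuousOn (fun τ => fun _ : ι => s τ) (Icc t0 t) :=
    continuousOn_pi.2 fun _ τ hτ => (hs τ hτ.1).continuousAt.continuousWithinAt
  obtain ⟨M, hM⟩ := hbound _ (isCompact_Icc.image_of_continuousOn hdiag_cont)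
  have hδxA : ∀ τ ∈ Icc t0 t, HasDerivAt δx (A τ (δx τ)) τ := by
    intro τ hτ
    refine (hδx τ hτ.1).congr_deriv (funext fun i => ?_)
    rw [fderiv_apply (hF τ (ht0.trans hτ.1) _) i]
    rfl
  have huA : ∀ τ ∈ Icc t0 t, HasDerivAt (fun τ => fun _ : ι => u τ) (A τ fun _ => u τ) τ := by
    intro τ hτ
    exact (hasDerivAt_pi.2 fun _ : ι => hu τ hτ.1).congr_deriv (funext fun i =>
      fderiv_apply_eq_fderiv_diag_apply (hFf · τ (ht0.trans hτ.1) i) (hF τ (ht0.trans hτ.1) _) _)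
  exact ODE_solution_unique_of_mem_Icc_of_linear
    (fun τ hτ => hM τ (ht0.trans hτ.1) _ ⟨τ, Ico_subset_Icc_self hτ, rfl⟩)
    hδxA huA h0 ⟨ht, le_rfl⟩

theorem hasDerivAt_col_of_hasDerivAt_apply {κ : Type*} [Fintype κ] [DecidableEq κ]
    {V : ℝ → Matrix κ κ ℝ} {L : (κ → ℝ) →L[ℝ] κ → ℝ} {τ : ℝ}
    (hV : ∀ r c, HasDerivAt (fun τ => V τ r c) (∑ l, L (Pi.single l 1) r * V τ l c) τ)
    (c : κ) : HasDerivAt (fun τ r => V τ r c) (L fun r => V τ r c) τ := by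
  refine hasDerivAt_pi.2 fun r => ?_
  refine (hV r c).congr_deriv ?_
  rw [show (L fun r => V τ r c) = _ from L.toLinearMap.pi_apply_eq_sum_univ_single _]
  simp only [Finset.sum_apply, Pi.smul_apply, smul_eq_mul, mul_comm, ContinuousLinearMap.coe_coe]

theorem hasDerivAt_blockRowSum_of_hasDerivAt_apply {ι κ : Type*} [Fintype ι] [Fintype κ]
    [DecidableEq ι] [DecidableEq κ] {V : ℝ → Matrix (ι × κ) (ι × κ) ℝ}
    {L : ι → (ι → κ → ℝ) →L[ℝ] κ → ℝ} {τ : ℝ}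
    (hV : ∀ p q : ι × κ, HasDerivAt (fun τ => V τ p q)
      (∑ q' : ι × κ, L p.1 (Pi.single q'.1 (Pi.single q'.2 1)) p.2 * V τ q' q) τ)
    (c : κ) :
    HasDerivAt (fun τ i r => ∑ j, V τ (i, r) (j, c))
      (fun i => L i fun i' r' => ∑ j, V τ (i', r') (j, c)) τ := by
  refine hasDerivAt_pi.2 fun i => hasDerivAt_pi.2 fun r => ?_
  refine (HasDerivAt.fun_sum fun j _ => hV (i, r) (j, c)).congr_deriv ?_
  rw [show (L i fun i' r' => ∑ j, V τ (i', r') (j, c)) = _ from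
    (L i).toLinearMap.pi_pi_apply_eq_sum_univ_single _, Finset.sum_comm]
  simp only [Finset.sum_apply, Pi.smul_apply, smul_eq_mul, ContinuousLinearMap.coe_coe,
    Finset.sum_mul, mul_comm]

theorem stmt_7_general (n m : ℕ)
    (F : (Fin m → Fin n → ℝ) → ℝ → Fin m → Fin n → ℝ)
    (f : (Fin n → ℝ) → Fin n → ℝ)
    -- Assumption A1
    (hA1a : ∀ (s : Fin n → ℝ) (t : ℝ), 0 ≤ t → ∀ i, F (fun _ => s) t i = f s)
    (hA1b : ∀ t : ℝ, 0 ≤ t → ContDiff ℝ 1 fun x => F x t)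
    (hA1c : ∀ K : Set (Fin m → Fin n → ℝ), IsCompact K →
      ∃ M : ℝ, ∀ t, 0 ≤ t → ∀ x ∈ K, ‖fderiv ℝ (fun y => F y t) x‖ ≤ M)
    (t0 : ℝ) (ht0 : 0 ≤ t0)
    (s : ℝ → Fin n → ℝ) (hs : ∀ t ∈ Set.Ici t0, HasDerivAt s (f (s t)) t) :
    (∀ (u0 : Fin n → ℝ) (u : ℝ → Fin n → ℝ) (δx : ℝ → Fin m → Fin n → ℝ),
      (∀ t ∈ Set.Ici t0, HasDerivAt u (fderiv ℝ f (s t) (u t)) t) →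
      u t0 = u0 →
      (∀ t ∈ Set.Ici t0, HasDerivAt δx
          (fun i => fderiv ℝ (fun x => F x t i) (fun _ => s t) (δx t)) t) →
      δx t0 = (fun _ => u0) →
      ∀ t ∈ Set.Ici t0, δx t = fun _ => u t) ∧
    (∀ (U : ℝ → Matrix (Fin m × Fin n) (Fin m × Fin n) ℝ)
        (Ub : ℝ → Matrix (Fin n) (Fin n) ℝ),
      U t0 = 1 →
      (∀ t ∈ Set.Ici t0, ∀ p q : Fin m × Fin n,
        HasDerivAt (fun τ => U τ p q)
          (∑ q' : Fin m × Fin n,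
            fderiv ℝ (fun x => F x t p.1) (fun _ => s t)
                (Pi.single q'.1 (Pi.single q'.2 1)) p.2
              * U t q' q) t) →
      Ub t0 = 1 →
      (∀ t ∈ Set.Ici t0, ∀ r c : Fin n,
        HasDerivAt (fun τ => Ub τ r c)
          (∑ l, fderiv ℝ f (s t) (Pi.single l 1) r * Ub t l c) t) →
      ∀ t ∈ Set.Ici t0, ∀ (i : Fin m) (r c : Fin n),
        ∑ j : Fin m, U t (i, r) (j, c) = Ub t r c) := by
  have hdiff : ∀ t : ℝ, 0 ≤ t → Differentiable ℝ fun x => F x t :=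
    fun t ht => (hA1b t ht).differentiable one_ne_zero
  refine ⟨fun u0 u δx hu hu0 hδx h0 => variational_solution_eq_diag hA1a hdiff hA1c ht0 hs hu hδx
    (by rw [h0, hu0]), fun U Ub hU0 hU hUb0 hUb t ht i r c => ?_⟩
  have h0 : (fun i r => ∑ j, U t0 (i, r) (j, c)) = fun _ r => Ub t0 r c := by
    simp only [hU0, hUb0, Matrix.sum_one_apply_prod]
  have hdiag := variational_solution_eq_diag hA1a hdiff hA1c ht0 hs
    (fun τ hτ => hasDerivAt_col_of_hasDerivAt_apply (hUb τ hτ) c)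
    (fun τ hτ => hasDerivAt_blockRowSum_of_hasDerivAt_apply (hU τ hτ) c) h0 t ht
  exact congrFun (congrFun hdiag i) r

/-- Lemma 5, item 1: under Assumption A1, a solution of the variational
equation with diagonal initial data `1_m ⊗ u0` stays diagonal and equals `1_m ⊗ u(t)`,
where `u` solves `u̇ = Df(s(t))u`; consequently the block row sums of the fundamental
solution `U(t,t0,s0)` all equal the fundamental solution `Ŭ(t,t0,s0)` of
`u̇ = Df(s(t))u`. -/
theorem stmt_7 (n m : ℕ) (hn : 0 < n) (hm : 0 < m)
    (F : (Fin m → Fin n → ℝ) → ℝ → Fin m → Fin n → ℝ)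
    (f : (Fin n → ℝ) → Fin n → ℝ)
    -- Assumption A1
    (hA1a : ∀ (s : Fin n → ℝ) (t : ℝ), 0 ≤ t → ∀ i, F (fun _ => s) t i = f s)
    (hA1b : ∀ t : ℝ, 0 ≤ t → ContDiff ℝ 1 fun x => F x t)
    (hA1c : ∀ K : Set (Fin m → Fin n → ℝ), IsCompact K →
      ∃ M : ℝ, ∀ t, 0 ≤ t → ∀ x ∈ K, ‖fderiv ℝ (fun y => F y t) x‖ ≤ M)
    (hA1d : ∀ K : Set (Fin m → Fin n → ℝ), IsCompact K →
      ∃ C : ℝ, ∀ t, 0 ≤ t → ∀ x ∈ K, ∀ y ∈ K,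
        ‖fderiv ℝ (fun z => F z t) x - fderiv ℝ (fun z => F z t) y‖ ≤ C * ‖x - y‖)
    (hA1e : ∀ x, Measurable (fun t => F x t) ∧
      ∀ v, Measurable fun t => fderiv ℝ (fun y => F y t) x v)
    (t0 : ℝ) (ht0 : 0 ≤ t0)
    (s : ℝ → Fin n → ℝ) (hs : ∀ t ∈ Set.Ici t0, HasDerivAt s (f (s t)) t) :
    (∀ (u0 : Fin n → ℝ) (u : ℝ → Fin n → ℝ) (δx : ℝ → Fin m → Fin n → ℝ),
      (∀ t ∈ Set.Ici t0, HasDerivAt u (fderiv ℝ f (s t) (u t)) t) →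
      u t0 = u0 →
      (∀ t ∈ Set.Ici t0, HasDerivAt δx
          (fun i => fderiv ℝ (fun x => F x t i) (fun _ => s t) (δx t)) t) →
      δx t0 = (fun _ => u0) →
      ∀ t ∈ Set.Ici t0, δx t = fun _ => u t) ∧
    (∀ (U : ℝ → Matrix (Fin m × Fin n) (Fin m × Fin n) ℝ)
        (Ub : ℝ → Matrix (Fin n) (Fin n) ℝ),
      U t0 = 1 →
      (∀ t ∈ Set.Ici t0, ∀ p q : Fin m × Fin n,
        HasDerivAt (fun τ => U τ p q)
          (∑ q' : Fin m × Fin n,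
            fderiv ℝ (fun x => F x t p.1) (fun _ => s t)
                (Pi.single q'.1 (Pi.single q'.2 1)) p.2
              * U t q' q) t) →
      Ub t0 = 1 →
      (∀ t ∈ Set.Ici t0, ∀ r c : Fin n,
        HasDerivAt (fun τ => Ub τ r c)
          (∑ l, fderiv ℝ f (s t) (Pi.single l 1) r * Ub t l c) t) →
      ∀ t ∈ Set.Ici t0, ∀ (i : Fin m) (r c : Fin n),
        ∑ j : Fin m, U t (i, r) (j, c) = Ub t r c) :=
  stmt_7_general n m F f hA1a hA1b hA1c t0 ht0 s hs
end

section
/- Fix m, n ≥ 1. Let P ∈ ℝ^{nm×nm} be an orthogonal matrix whose first n columns form the block P₁ = (1/√m)·(1_m ⊗ P₀) for some orthogonal matrix P₀ ∈ ℝ^{n×n}, and let P₂ ∈ ℝ^{nm×n(m−1)} consist of the remaining n(m−1) columns. Then there exist constants c, C > 0 (depending only on m, n and the chosen matrix norms) such that for every matrix U ∈ ℝ^{nm×nm}, written in block form (U_ij)_{i,j=1}^m with U_ij ∈ ℝ^{n×n}, whose block row sums Σ_{j=1}^m U_ij are independent of i, one has c·‖P₂ᵀ U P₂‖ ≤ diam(U)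 ≤ C·‖P₂ᵀ U P₂‖, where diam(U) = max_{i,j} ‖U_i − U_j‖ and U_i = [U_i1, …, U_im] denotes the i-th block row. -/
/-!
Write `Π = P₂P₂ᵀ = 1 - P₁P₁ᵀ` and `W = P₂ᵀUP₂`. A matrix of the form `P₁X` has all block rows
equal, and so does `UP₁` because `P₁` is `1_m ⊗ P₀` up to scaling and the block row sums of `U`
agree. Hence `U - ΠUΠ = P₁P₁ᵀU + UP₁P₁ᵀ - P₁P₁ᵀUP₁P₁ᵀ` has all block rows equal, so the differences
of block rows of `U` are those of `ΠUΠ = P₂WP₂ᵀ`, whose entries are bounded by `‖W‖₁`.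
Conversely `P₂ᵀ` kills every matrix `M` with equal block rows, since `M = P₁X` for some `X`;
taking for `M` the matrix all of whose block rows equal a fixed block row of `U` gives
`W = P₂ᵀ(U - M)P₂`, and `‖U - M‖₁` is a sum of `m` distances between block rows.
-/

open Matrix

namespace BlockRows

variable {ι κ α β γ δ : Type*}

section Norms

variable [Fintype κ] [Fintype α] [Fintype β]

def entrywiseL1 (W : Matrix α β ℝ) : ℝ := ∑ a, ∑ b, |W a b|

def blockRowDist (U : Matrix (ι × κ) β ℝ) (i i' : ι) : ℝ :=
  ∑ r, ∑ q, |U (i, r) q - U (i', r) q|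

noncomputable def blockDiam (U : Matrix (ι × κ) β ℝ) : ℝ := ⨆ i, ⨆ i', blockRowDist U i i'

lemma entrywiseL1_nonneg (W : Matrix α β ℝ) : 0 ≤ entrywiseL1 W := by
  unfold entrywiseL1
  positivity

lemma entrywiseL1_le_of_abs_apply_le {W : Matrix α β ℝ} {c : ℝ} (h : ∀ a b, |W a b| ≤ c) :
    entrywiseL1 W ≤ Fintype.card α * (Fintype.card β * c) := by
  calc entrywiseL1 W ≤ ∑ _a : α, ∑ _b : β, c :=
        Finset.sum_le_sum fun a _ => Finset.sum_le_sum fun b _ => h a b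
    _ = _ := by simp

lemma blockRowDist_nonneg (U : Matrix (ι × κ) β ℝ) (i i' : ι) : 0 ≤ blockRowDist U i i' := by
  unfold blockRowDist
  positivity

lemma blockRowDist_le_blockDiam [Finite ι] (U : Matrix (ι × κ) β ℝ) (i i' : ι) :
    blockRowDist U i i' ≤ blockDiam U :=
  (le_ciSup (Set.finite_range _).bddAbove i').trans <|
    le_ciSup (f := fun i => ⨆ i', blockRowDist U i i') (Set.finite_range _).bddAbove i

lemma blockDiam_nonneg (U : Matrix (ι × κ) β ℝ) : 0 ≤ blockDiam U :=
  Real.iSup_nonneg fun _ => Real.iSup_nonneg fun _ => blockRowDist_nonneg U _ _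

lemma blockDiam_le {U : Matrix (ι × κ) β ℝ} {c : ℝ} (h : ∀ i i', blockRowDist U i i' ≤ c)
    (hc : 0 ≤ c) : blockDiam U ≤ c :=
  Real.iSup_le (fun i => Real.iSup_le (h i) hc) hc

end Norms

lemma abs_apply_le_one_of_transpose_mul_self_eq_one [Fintype α] [DecidableEq β]
    {P : Matrix α β ℝ} (h : Pᵀ * P = 1) (p : α) (a : β) : |P p a| ≤ 1 := by
  have hcol : ∑ x, P x a * P x a = 1 := by
    simpa [mul_apply] using congrFun (congrFun h a) a
  refine abs_le_one_iff_mul_self_le_one.mpr ?_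
  calc P p a * P p a ≤ ∑ x, P x a * P x a :=
        Finset.single_le_sum (f := fun x => P x a * P x a) (fun _ _ => mul_self_nonneg _)
          (Finset.mem_univ p)
    _ = 1 := hcol

lemma abs_mul_mul_apply_le_entrywiseL1 [Fintype γ] [Fintype δ] {A : Matrix α γ ℝ}
    {B : Matrix δ β ℝ} (hA : ∀ p a, |A p a| ≤ 1) (hB : ∀ b q, |B b q| ≤ 1)
    (W : Matrix γ δ ℝ) (p : α) (q : β) : |(A * W * B) p q| ≤ entrywiseL1 W := by
  have hexpand : (A * W * B) p q = ∑ a, ∑ b, A p a * W a b * B b q := by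
    simp only [mul_apply, Finset.sum_mul]
    exact Finset.sum_comm
  have hterm : ∀ a b, |A p a * W a b * B b q| ≤ |W a b| := fun a b => by
    rw [abs_mul, abs_mul]
    calc |A p a| * |W a b| * |B b q| ≤ 1 * |W a b| * 1 := by
          gcongr
          exacts [hA p a, hB b q]
      _ = |W a b| := by ring
  rw [hexpand]
  calc _ ≤ ∑ a, ∑ b, |A p a * W a b * B b q| :=
        (Finset.abs_sum_le_sum_abs _ _).trans
          (Finset.sum_le_sum fun a _ => Finset.abs_sum_le_sum_abs _ _)
    _ ≤ entrywiseL1 W := Finset.sum_le_sum fun a _ => Finset.sum_le_sum fun b _ => hterm a b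

def IsBlockRowConst (A : Matrix (ι × κ) β ℝ) : Prop :=
  ∀ i i' r q, A (i, r) q = A (i', r) q

/-- The matrix `1_ι ⊗ A`. -/
def blockReplicate (ι : Type*) (A : Matrix κ β ℝ) : Matrix (ι × κ) β ℝ :=
  A.submatrix Prod.snd id

namespace IsBlockRowConst

variable {A B : Matrix (ι × κ) β ℝ}

lemma add (hA : IsBlockRowConst A) (hB : IsBlockRowConst B) : IsBlockRowConst (A + B) :=
  fun i i' r q => by simp only [Matrix.add_apply, hA i i' r q, hB i i' r q]

lemma sub (hA : IsBlockRowConst A) (hB : IsBlockRowConst B) : IsBlockRowConst (A - B) :=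
  fun i i' r q => by simp only [Matrix.sub_apply, hA i i' r q, hB i i' r q]

lemma mul [Fintype γ] {A : Matrix (ι × κ) γ ℝ} (hA : IsBlockRowConst A) (X : Matrix γ β ℝ) :
    IsBlockRowConst (A * X) :=
  fun i i' r q => by simp only [mul_apply, hA i i' r]

lemma sub_apply_sub_eq (hAB : IsBlockRowConst (A - B)) (i i' : ι) (r : κ) (q : β) :
    A (i, r) q - A (i', r) q = B (i, r) q - B (i', r) q := by
  have h := hAB i i' r q
  simp only [Matrix.sub_apply] at h
  linarith

lemma eq_blockReplicate (hA : IsBlockRowConst A) (i₀ : ι) :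
    A = blockReplicate ι (A.submatrix (Prod.mk i₀) id) := by
  ext ⟨i, r⟩ q
  exact hA i i₀ r q

lemma blockRowDist_le [Fintype κ] [Fintype β] (hAB : IsBlockRowConst (A - B)) {c : ℝ}
    (hB : ∀ p q, |B p q| ≤ c) (i i' : ι) :
    blockRowDist A i i' ≤ Fintype.card κ * (Fintype.card β * (2 * c)) := by
  calc blockRowDist A i i' ≤ ∑ _r : κ, ∑ _q : β, 2 * c :=
        Finset.sum_le_sum fun r _ => Finset.sum_le_sum fun q _ => by
          rw [hAB.sub_apply_sub_eq]
          linarith [abs_sub (B (i, r) q) (B (i', r) q), hB (i, r) q, hB (i', r) q]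
    _ = _ := by simp

end IsBlockRowConst

lemma isBlockRowConst_blockReplicate (A : Matrix κ β ℝ) :
    IsBlockRowConst (blockReplicate ι A) :=
  fun _ _ _ _ => rfl

lemma blockReplicate_mul [Fintype γ] (A : Matrix κ γ ℝ) (X : Matrix γ β ℝ) :
    blockReplicate ι A * X = blockReplicate ι (A * X) := by
  ext p q
  simp [blockReplicate, mul_apply]

lemma isBlockRowConst_mul_blockReplicate [Fintype γ] [Fintype δ]
    {U : Matrix (ι × κ) (γ × δ) ℝ}
    (hU : ∀ i i' r s, ∑ j, U (i, r) (j, s) = ∑ j, U (i', r) (j, s)) (B : Matrix δ β ℝ) :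
    IsBlockRowConst (U * blockReplicate γ B) := by
  intro i i' r q
  have hform : ∀ i, (U * blockReplicate γ B) (i, r) q = ∑ s, (∑ j, U (i, r) (j, s)) * B s q := by
    intro i
    simp only [mul_apply, Fintype.sum_prod_type, blockReplicate, submatrix_apply, id,
      Finset.sum_mul]
    exact Finset.sum_comm
  rw [hform, hform]
  simp only [hU i i' r]

lemma transpose_mul_eq_zero_of_isBlockRowConst [Fintype ι] [Fintype κ] [Fintype γ]
    [Nonempty ι] [DecidableEq κ] {P₂ : Matrix (ι × κ) α ℝ} {B : Matrix κ γ ℝ}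
    {B' : Matrix γ κ ℝ} (hB : B * B' = 1) (h : P₂ᵀ * blockReplicate ι B = 0)
    {A : Matrix (ι × κ) β ℝ} (hA : IsBlockRowConst A) : P₂ᵀ * A = 0 := by
  obtain ⟨i₀⟩ := ‹Nonempty ι›
  rw [hA.eq_blockReplicate i₀, ← Matrix.one_mul (A.submatrix _ _), ← hB, Matrix.mul_assoc,
    ← blockReplicate_mul, ← Matrix.mul_assoc, h, Matrix.zero_mul]

section Compression

variable [Fintype ι] [Fintype κ] [Fintype α] {U : Matrix (ι × κ) (ι × κ) ℝ}

lemma isBlockRowConst_sub_compression [DecidableEq ι] [DecidableEq κ] [Fintype γ]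
    {P₁ : Matrix (ι × κ) γ ℝ} {P₂ : Matrix (ι × κ) α ℝ} (hP : P₁ * P₁ᵀ + P₂ * P₂ᵀ = 1)
    (hP₁ : IsBlockRowConst P₁) (hUP₁ : IsBlockRowConst (U * P₁)) :
    IsBlockRowConst (U - P₂ * (P₂ᵀ * U * P₂) * P₂ᵀ) := by
  have hdecomp : U - P₂ * (P₂ᵀ * U * P₂) * P₂ᵀ
      = P₁ * (P₁ᵀ * U) + U * P₁ * P₁ᵀ - P₁ * (P₁ᵀ * (U * P₁ * P₁ᵀ)) := by
    rw [show P₂ * (P₂ᵀ * U * P₂) * P₂ᵀ = P₂ * P₂ᵀ * U * (P₂ * P₂ᵀ) by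
      simp only [Matrix.mul_assoc], eq_sub_of_add_eq' hP]
    simp only [Matrix.mul_sub, Matrix.sub_mul, Matrix.one_mul, Matrix.mul_one, Matrix.mul_assoc]
    abel
  rw [hdecomp]
  exact ((hP₁.mul _).add (hUP₁.mul _)).sub (hP₁.mul _)

lemma blockDiam_le_entrywiseL1_compression [DecidableEq ι] [DecidableEq κ] [Fintype γ]
    {P₁ : Matrix (ι × κ) γ ℝ} {P₂ : Matrix (ι × κ) α ℝ} (hP : P₁ * P₁ᵀ + P₂ * P₂ᵀ = 1)
    (hP₂ : ∀ p a, |P₂ p a| ≤ 1) (hP₁ : IsBlockRowConst P₁) (hUP₁ : IsBlockRowConst (U * P₁)) :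
    blockDiam U ≤
      Fintype.card κ * (Fintype.card (ι × κ) * (2 * entrywiseL1 (P₂ᵀ * U * P₂))) :=
  blockDiam_le
    ((isBlockRowConst_sub_compression hP hP₁ hUP₁).blockRowDist_le
      (abs_mul_mul_apply_le_entrywiseL1 hP₂ (fun b q => hP₂ q b) _))
    (by have := entrywiseL1_nonneg (P₂ᵀ * U * P₂); positivity)

lemma entrywiseL1_sub_blockReplicate [Fintype β] (U : Matrix (ι × κ) β ℝ) (i₀ : ι) :
    entrywiseL1 (U - blockReplicate ι (U.submatrix (Prod.mk i₀) id))
      = ∑ i, blockRowDist U i i₀ := by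
  simp only [entrywiseL1, Fintype.sum_prod_type, blockRowDist, Matrix.sub_apply, blockReplicate,
    submatrix_apply, id]

lemma entrywiseL1_compression_le_blockDiam [Nonempty ι] {P₂ : Matrix (ι × κ) α ℝ}
    (hP₂ : ∀ p a, |P₂ p a| ≤ 1)
    (hker : ∀ A : Matrix (ι × κ) (ι × κ) ℝ, IsBlockRowConst A → P₂ᵀ * A = 0) :
    entrywiseL1 (P₂ᵀ * U * P₂) ≤
      Fintype.card α * (Fintype.card α * (Fintype.card ι * blockDiam U)) := by
  obtain ⟨i₀⟩ := ‹Nonempty ι›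
  set M := blockReplicate ι (U.submatrix (Prod.mk i₀) id)
  have hW : P₂ᵀ * U * P₂ = P₂ᵀ * (U - M) * P₂ := by
    rw [Matrix.mul_sub, hker M (isBlockRowConst_blockReplicate _), sub_zero]
  refine hW ▸ entrywiseL1_le_of_abs_apply_le fun a b => ?_
  calc |(P₂ᵀ * (U - M) * P₂) a b| ≤ entrywiseL1 (U - M) :=
        abs_mul_mul_apply_le_entrywiseL1 (fun a p => hP₂ p a) hP₂ _ a b
    _ = ∑ i, blockRowDist U i i₀ := entrywiseL1_sub_blockReplicate U i₀
    _ ≤ ∑ _i : ι, blockDiam U := Finset.sum_le_sum fun i _ => blockRowDist_le_blockDiam U i i₀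
    _ = Fintype.card ι * blockDiam U := by simp

end Compression

end BlockRows

open BlockRows in
theorem stmt_9_general (m n : ℕ) (hm : 0 < m) :
    ∃ c C : ℝ, 0 < c ∧ 0 < C ∧
      ∀ (P₀ : Matrix (Fin n) (Fin n) ℝ)
        (P₁ : Matrix (Fin m × Fin n) (Fin n) ℝ)
        (P₂ : Matrix (Fin m × Fin n) (Fin (n * (m - 1))) ℝ),
        P₀ᵀ * P₀ = 1 →
        (∀ (p : Fin m × Fin n) (c' : Fin n),
          P₁ p c' = (Real.sqrt m)⁻¹ * P₀ p.2 c') →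
        P₁ᵀ * P₁ = 1 →
        P₂ᵀ * P₂ = 1 →
        P₁ᵀ * P₂ = 0 →
        P₁ * P₁ᵀ + P₂ * P₂ᵀ = 1 →
        ∀ U : Matrix (Fin m × Fin n) (Fin m × Fin n) ℝ,
          (∀ (i i' : Fin m) (r c' : Fin n),
            ∑ j : Fin m, U (i, r) (j, c') = ∑ j : Fin m, U (i', r) (j, c')) →
          c * (∑ a, ∑ b, |(P₂ᵀ * U * P₂) a b|)
              ≤ (⨆ i : Fin m, ⨆ i' : Fin m,
                  ∑ r : Fin n, ∑ q : Fin m × Fin n, |U (i, r) q - U (i', r) q|) ∧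
            (⨆ i : Fin m, ⨆ i' : Fin m,
                ∑ r : Fin n, ∑ q : Fin m × Fin n, |U (i, r) q - U (i', r) q|)
              ≤ C * (∑ a, ∑ b, |(P₂ᵀ * U * P₂) a b|) := by
  have : Nonempty (Fin m) := ⟨⟨0, hm⟩⟩
  have hsqrt : Real.sqrt m ≠ 0 := by positivity
  refine ⟨(((n * (m - 1) : ℕ) : ℝ) ^ 2 * m + 1)⁻¹, 2 * n * (m * n) + 1,
    by positivity, by positivity, ?_⟩
  intro P₀ P₁ P₂ hP₀ hP₁ _ hP₂ hP₁₂ hP U hU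
  have hP₁rep : P₁ = blockReplicate (Fin m) ((Real.sqrt m)⁻¹ • P₀) := by
    ext p c
    simp [hP₁ p c, blockReplicate]
  have hinv : (Real.sqrt m)⁻¹ • P₀ * (Real.sqrt m • P₀ᵀ) = 1 := by
    rw [Matrix.smul_mul, Matrix.mul_smul, smul_smul, inv_mul_cancel₀ hsqrt, one_smul,
      mul_eq_one_comm.mp hP₀]
  have hP₂₁ : P₂ᵀ * P₁ = 0 := by simpa using congrArg transpose hP₁₂
  have hP₂bdd := abs_apply_le_one_of_transpose_mul_self_eq_one hP₂
  have hlow := entrywiseL1_compression_le_blockDiam (U := U) hP₂bdd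
    fun _ => transpose_mul_eq_zero_of_isBlockRowConst hinv (hP₁rep ▸ hP₂₁)
  have hup := blockDiam_le_entrywiseL1_compression hP hP₂bdd
    (hP₁rep ▸ isBlockRowConst_blockReplicate _) (hP₁rep ▸ isBlockRowConst_mul_blockReplicate hU _)
  simp only [Fintype.card_fin, Fintype.card_prod] at hlow hup
  have hW := entrywiseL1_nonneg (P₂ᵀ * U * P₂)
  have hdiam := blockDiam_nonneg U
  change _ * entrywiseL1 (P₂ᵀ * U * P₂) ≤ blockDiam U ∧ blockDiam U ≤ _ * entrywiseL1 _
  constructor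
  · rw [inv_mul_le_iff₀ (by positivity)]
    push_cast at hlow ⊢
    nlinarith
  · push_cast at hup
    nlinarith

/-- for an orthogonal `P = [P₁ P₂] ∈ ℝ^{nm×nm}` with
`P₁ = (1/√m)(1_m ⊗ P₀)`, `P₀` orthogonal, the Hajnal diameter
`diam(U) = max_{i,i'} ‖U_i − U_{i'}‖` (block rows measured in the entrywise ℓ¹ norm)
is equivalent, with constants depending only on `m`, `n` (and the norms), to
`‖P₂ᵀ U P₂‖` (entrywise ℓ¹ norm), uniformly over all `U` whose block row sums
`Σ_j U_ij` are independent of `i`. -/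
theorem stmt_9 (m n : ℕ) (hm : 0 < m) (hn : 0 < n) :
    ∃ c C : ℝ, 0 < c ∧ 0 < C ∧
      ∀ (P₀ : Matrix (Fin n) (Fin n) ℝ)
        (P₁ : Matrix (Fin m × Fin n) (Fin n) ℝ)
        (P₂ : Matrix (Fin m × Fin n) (Fin (n * (m - 1))) ℝ),
        P₀ᵀ * P₀ = 1 →
        (∀ (p : Fin m × Fin n) (c' : Fin n),
          P₁ p c' = (Real.sqrt m)⁻¹ * P₀ p.2 c') →
        P₁ᵀ * P₁ = 1 →
        P₂ᵀ * P₂ = 1 →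
        P₁ᵀ * P₂ = 0 →
        P₁ * P₁ᵀ + P₂ * P₂ᵀ = 1 →
        ∀ U : Matrix (Fin m × Fin n) (Fin m × Fin n) ℝ,
          (∀ (i i' : Fin m) (r c' : Fin n),
            ∑ j : Fin m, U (i, r) (j, c') = ∑ j : Fin m, U (i', r) (j, c')) →
          c * (∑ a, ∑ b, |(P₂ᵀ * U * P₂) a b|)
              ≤ (⨆ i : Fin m, ⨆ i' : Fin m,
                  ∑ r : Fin n, ∑ q : Fin m × Fin n, |U (i, r) q - U (i', r) q|) ∧
            (⨆ i : Fin m, ⨆ i' : Fin m,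
                ∑ r : Fin n, ∑ q : Fin m × Fin n, |U (i, r) q - U (i', r) q|)
              ≤ C * (∑ a, ∑ b, |(P₂ᵀ * U * P₂) a b|) :=
  stmt_9_general m n hm
end

section
/- Suppose Assumption A4 holds and σ > 0, and let u : [t0,∞) → ℝ^m be a solution of u̇_i(t) = σ Σ_{j=1}^m l_ij(t) u_j(t), i = 1,…,m. Then the function t ↦ min_{1≤i≤m} u_i(t) is nondecreasing on [t0,∞). In particular, if u_i(t0) ≥ 0 for all i, then u_i(t) ≥ 0 for all i and all t ≥ t0. -/
/-!
Since the rows of `L` sum to zero, `u̇_i = σ Σ_{j ≠ i} l_ij (u_j - u_i)`, which is `≥ 0` whenever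
`u_i` is the smallest component. A right Dini derivative argument then shows that the minimum of
finitely many differentiable functions, each with nonnegative derivative at the instants where it
is minimal, is nondecreasing.
-/

open Set Filter
open scoped Topology

section RowSumZero

variable {ι R : Type*} [Fintype ι] [DecidableEq ι]

theorem Finset.sum_mul_eq_sum_compl_mul_sub [CommRing R] {a u : ι → R} {i : ι}
    (ha : a i = -∑ j ∈ ({i}ᶜ : Finset ι), a j) :
    ∑ j, a j * u j = ∑ j ∈ ({i}ᶜ : Finset ι), a j * (u j - u i) := by
  rw [← Finset.sum_compl_add_sum {i}, Finset.sum_singleton, ha]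
  simp only [mul_sub, Finset.sum_sub_distrib, ← Finset.sum_mul]
  ring

theorem Finset.sum_mul_nonneg_of_isMin [CommRing R] [PartialOrder R] [IsOrderedRing R]
    {a u : ι → R} {i : ι} (hoff : ∀ j, j ≠ i → 0 ≤ a j)
    (hdiag : a i = -∑ j ∈ ({i}ᶜ : Finset ι), a j) (hmin : ∀ j, u i ≤ u j) :
    0 ≤ ∑ j, a j * u j := by
  rw [Finset.sum_mul_eq_sum_compl_mul_sub hdiag]
  refine Finset.sum_nonneg fun j hj => mul_nonneg (hoff j ?_) (sub_nonneg.2 (hmin j))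
  simpa using hj

end RowSumZero

theorem HasDerivAt.eventually_nhdsGT_sub_mul_lt {φ : ℝ → ℝ} {φ' x c r : ℝ}
    (hφ : HasDerivAt φ φ' x) (hc : c ≤ φ x) (hφ' : c = φ x → 0 ≤ φ') (hr : 0 < r) :
    ∀ᶠ z in 𝓝[>] x, c - r * (z - x) < φ z := by
  rcases hc.eq_or_lt with rfl | hlt
  · have hslope : ∀ᶠ z in 𝓝[>] x, -r < slope φ x z :=
      (hasDerivAt_iff_tendsto_slope.1 hφ).mono_left (nhdsGT_le_nhdsNE x)
        (Ioi_mem_nhds ((neg_neg_iff_pos.2 hr).trans_le (hφ' rfl)))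
    filter_upwards [hslope, self_mem_nhdsWithin] with z hz hxz
    rw [slope_def_field, lt_div_iff₀ (sub_pos.2 hxz)] at hz
    linarith
  · filter_upwards [nhdsWithin_le_nhds (hφ.continuousAt.eventually (Ioi_mem_nhds hlt)),
      self_mem_nhdsWithin] with z hz hxz
    nlinarith [mem_Ioi.1 hxz]

theorem monotoneOn_iInf_of_hasDerivAt_nonneg_of_isMin {ι : Type*} [Fintype ι] [Nonempty ι]
    {f f' : ℝ → ι → ℝ} {s : Set ℝ} (hs : s.OrdConnected)
    (hf : ∀ i, ∀ t ∈ s, HasDerivAt (fun τ => f τ i) (f' t i) t)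
    (hmin : ∀ t ∈ s, ∀ i, (∀ j, f t i ≤ f t j) → 0 ≤ f' t i) :
    MonotoneOn (fun t => ⨅ i, f t i) s := by
  set g : ℝ → ℝ := fun t => Finset.univ.inf' Finset.univ_nonempty (f t)
  have hg : (fun t => ⨅ i, f t i) = g := funext fun t => (Finset.inf'_univ_eq_ciInf _).symm
  have hg_le : ∀ t i, g t ≤ f t i := fun t i => Finset.inf'_le _ (Finset.mem_univ i)
  rw [hg]
  intro a ha b hb hab
  have hIcc : Icc a b ⊆ s := hs.out ha hb
  have hcont : ContinuousOn g (Icc a b) :=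
    ContinuousOn.finset_inf'_apply _ fun i _ x hx =>
      (hf i x (hIcc hx)).continuousAt.continuousWithinAt
  -- Every right Dini derivative of `-g` is `≤ 0`, so `-g` stays below its initial value.
  have hslope : ∀ x ∈ Ico a b, ∀ r, (0 : ℝ) < r → ∃ᶠ z in 𝓝[>] x, slope (-g) x z < r := by
    intro x hx r hr
    have hfi : ∀ i, ∀ᶠ z in 𝓝[>] x, g x - r * (z - x) < f z i := fun i =>
      (hf i x (hIcc (Ico_subset_Icc_self hx))).eventually_nhdsGT_sub_mul_lt (hg_le x i)
        (fun h => hmin x (hIcc (Ico_subset_Icc_self hx)) i fun j => h ▸ hg_le x j) hr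
    refine Eventually.frequently ?_
    filter_upwards [eventually_all.2 hfi, self_mem_nhdsWithin] with z hz hxz
    have hgz : g x - r * (z - x) < g z := (Finset.lt_inf'_iff _).2 fun i _ => hz i
    rw [slope_def_field, div_lt_iff₀ (sub_pos.2 hxz)]
    simp only [Pi.neg_apply]
    linarith
  have := image_le_of_liminf_slope_right_le_deriv_boundary (B := fun _ => -g a) (B' := 0)
    hcont.neg le_rfl continuousOn_const (fun x _ => hasDerivWithinAt_const x _ _) hslope
    (right_mem_Icc.2 hab)
  simpa using this

theorem stmt_12_general (m : ℕ) (hm : 0 < m) (σ : ℝ) (hσ : 0 < σ)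
    (L : ℝ → Matrix (Fin m) (Fin m) ℝ)
    (hoff : ∀ t, 0 ≤ t → ∀ i j, i ≠ j → 0 ≤ L t i j)
    (hdiag : ∀ t, 0 ≤ t → ∀ i, L t i i = -∑ j ∈ ({i}ᶜ : Finset (Fin m)), L t i j)
    (t0 : ℝ) (ht0 : 0 ≤ t0) (u : ℝ → Fin m → ℝ)
    (hu : ∀ i, ∀ t ∈ Set.Ici t0, HasDerivAt (fun s => u s i) (σ * ∑ j, L t i j * u t j) t) :
    MonotoneOn (fun t => ⨅ i, u t i) (Set.Ici t0) ∧
      ((∀ i, 0 ≤ u t0 i) → ∀ t ∈ Set.Ici t0, ∀ i, 0 ≤ u t i) := by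
  have : Nonempty (Fin m) := Fin.pos_iff_nonempty.mp hm
  have hmono : MonotoneOn (fun t => ⨅ i, u t i) (Ici t0) :=
    monotoneOn_iInf_of_hasDerivAt_nonneg_of_isMin ordConnected_Ici hu fun t ht i hi =>
      have ht' : 0 ≤ t := ht0.trans ht
      mul_nonneg hσ.le (Finset.sum_mul_nonneg_of_isMin (fun j hj => hoff t ht' i j hj.symm)
        (hdiag t ht' i) hi)
  refine ⟨hmono, fun h0 t ht i => ?_⟩
  calc 0 ≤ ⨅ i, u t0 i := le_ciInf h0
    _ ≤ ⨅ i, u t i := hmono self_mem_Ici ht ht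
    _ ≤ u t i := ciInf_le (Finite.bddBelow_range _) i

/-- under Assumption A4 and `σ > 0`, along any solution of
`u̇_i = σ Σ_j l_ij(t) u_j`, the minimum `min_i u_i(t)` is nondecreasing on `[t0,∞)`;
in particular nonnegative initial data stay nonnegative. -/
theorem stmt_12 (m : ℕ) (hm : 0 < m) (σ : ℝ) (hσ : 0 < σ)
    (L : ℝ → Matrix (Fin m) (Fin m) ℝ) (M₁ : ℝ) (hM₁ : 0 < M₁)
    (hmeas : ∀ i j, Measurable fun t => L t i j)
    (hoff : ∀ t, 0 ≤ t → ∀ i j, i ≠ j → 0 ≤ L t i j)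
    (hdiag : ∀ t, 0 ≤ t → ∀ i, L t i i = -∑ j ∈ ({i}ᶜ : Finset (Fin m)), L t i j)
    (hbdd : ∀ t, 0 ≤ t → ∀ i j, |L t i j| ≤ M₁)
    (t0 : ℝ) (ht0 : 0 ≤ t0) (u : ℝ → Fin m → ℝ)
    (hu : ∀ i, ∀ t ∈ Set.Ici t0, HasDerivAt (fun s => u s i) (σ * ∑ j, L t i j * u t j) t) :
    MonotoneOn (fun t => ⨅ i, u t i) (Set.Ici t0) ∧
      ((∀ i, 0 ≤ u t0 i) → ∀ t ∈ Set.Ici t0, ∀ i, 0 ≤ u t i) :=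
  stmt_12_general m hm σ hσ L hoff hdiag t0 ht0 u hu
end

section
/- Suppose Assumption A4 holds. If there exist δ > 0 and T > 0 such that for every t0 ≥ 0 the graph G([t0, t0+T], δ) has a spanning tree, then there exist δ₁ > 0 and T₁ > 0 (one may take T₁ = (m−1)T) such that for every t0 ≥ 0 the solution matrix V(t0+T₁, t0) is δ₁-scrambling, i.e. η(V(t0+T₁, t0)) > δ₁. -/
/-!
Let `c = min 1 δ`. The zero row sums of `L` keep every solution of `ẋ = L x` with nonnegative
initial data nonnegative, and since `L t i i ≥ -M₁` the weighted entries `exp (M₁ t) * x t i`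
are then nondecreasing. Over a window `[s, s + T]`, an edge `a → b` of `G([s, s + T], δ)` feeds
`exp (M₁ t) * x t b` at rate `L t b a * exp (M₁ s) * x s a`, so one window multiplies the weighted
entries along its edges (or along a stay) by at least `c`; along a path `k → p` through `n`
consecutive windows, `V (t0 + n T) t0 p k ≥ c ^ n * exp (-M₁ n T)`.

It remains to see that any `p`, `q` have a common ancestor `k` through `m` windows. Going
backwards, prepend one window at a time to the sets of ancestors of `p` and of `q`: if neither
set grows, both are closed under predecessors in that window and so contain the root of its
spanning tree. Hence, as long as they are disjoint, their sizes add up to at least the number of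
windows plus two, which is impossible for `m` windows.
-/

open MeasureTheory Set Filter Topology Real Relation

structure IsRateMatrix {ι : Type*} [Fintype ι] (A : Matrix ι ι ℝ) : Prop where
  nonneg_of_ne : ∀ i j, i ≠ j → 0 ≤ A i j
  sum_row : ∀ i, ∑ j, A i j = 0

namespace IsRateMatrix

variable {ι : Type*} [Fintype ι] {A : Matrix ι ι ℝ} {M : ℝ} {v : ι → ℝ} {i : ι}

theorem of_diag_eq_neg_sum [DecidableEq ι] (hoff : ∀ i j, i ≠ j → 0 ≤ A i j)
    (hdiag : ∀ i, A i i = -∑ j ∈ ({i}ᶜ : Finset ι), A i j) : IsRateMatrix A :=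
  ⟨hoff, fun i => by rw [Fintype.sum_eq_add_sum_compl i, hdiag i, neg_add_cancel]⟩

theorem sum_compl_mul_nonneg [DecidableEq ι] (hA : IsRateMatrix A) (hv : ∀ k, 0 ≤ v k) (i : ι) :
    0 ≤ ∑ k ∈ ({i}ᶜ : Finset ι), A i k * v k :=
  Finset.sum_nonneg fun k hk =>
    mul_nonneg (hA.nonneg_of_ne i k (by rintro rfl; simp at hk)) (hv k)

theorem diag_nonpos (hA : IsRateMatrix A) (i : ι) : A i i ≤ 0 := by
  classical
  have hsum := hA.sum_row i
  rw [Fintype.sum_eq_add_sum_compl i] at hsum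
  have := hA.sum_compl_mul_nonneg (v := 1) (fun _ => zero_le_one) i
  simp only [Pi.one_apply, mul_one] at this
  linarith

theorem sum_mul_nonneg_of_forall_le (hA : IsRateMatrix A) (hv : ∀ k, v i ≤ v k) :
    0 ≤ ∑ k, A i k * v k := by
  have hshift : ∑ k, A i k * v k = ∑ k, A i k * (v k - v i) := by
    simp only [mul_sub, Finset.sum_sub_distrib, ← Finset.sum_mul, hA.sum_row i, zero_mul,
      sub_zero]
  rw [hshift]
  refine Finset.sum_nonneg fun k _ => ?_
  rcases eq_or_ne i k with rfl | hik
  · simp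
  · exact mul_nonneg (hA.nonneg_of_ne i k hik) (sub_nonneg.2 (hv k))

theorem add_sum_mul_nonneg (hA : IsRateMatrix A) (hM : -M ≤ A i i) (hv : ∀ k, 0 ≤ v k) :
    0 ≤ M * v i + ∑ k, A i k * v k := by
  classical
  rw [Fintype.sum_eq_add_sum_compl i]
  have hii : 0 ≤ (M + A i i) * v i := mul_nonneg (by linarith) (hv i)
  linarith [hA.sum_compl_mul_nonneg hv i]

theorem mul_le_add_sum_mul (hA : IsRateMatrix A) (hM : -M ≤ A i i) (hv : ∀ k, 0 ≤ v k)
    {a : ι} (ha : a ≠ i) : A i a * v a ≤ M * v i + ∑ k, A i k * v k := by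
  classical
  rw [Fintype.sum_eq_add_sum_compl i]
  have hii : 0 ≤ (M + A i i) * v i := mul_nonneg (by linarith) (hv i)
  have hia : A i a * v a ≤ ∑ k ∈ ({i}ᶜ : Finset ι), A i k * v k :=
    Finset.single_le_sum (f := fun k => A i k * v k)
      (fun k hk => mul_nonneg (hA.nonneg_of_ne i k (by rintro rfl; simp at hk)) (hv k))
      (by simpa using ha)
  linarith

end IsRateMatrix

/-- A first time at which some `f i` vanishes would be a point where `f i` decreases to `0`
from the left, contradicting `0 < f' i`. -/
theorem forall_pos_of_hasDerivAt_pos_of_eq_zero {ι : Type*} [Finite ι] {f f' : ι → ℝ → ℝ}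
    {a b : ℝ} (hf : ∀ i, ∀ t ∈ Icc a b, HasDerivAt (f i) (f' i t) t) (ha : ∀ i, 0 < f i a)
    (hzero : ∀ t ∈ Ioc a b, ∀ i, (∀ j, 0 ≤ f j t) → f i t = 0 → 0 < f' i t) :
    ∀ t ∈ Icc a b, ∀ i, 0 < f i t := by
  by_contra! hneg
  obtain ⟨t₁, ht₁, i₁, hi₁⟩ := hneg
  have hcont : ∀ i, ContinuousOn (f i) (Icc a b) := fun i t ht =>
    (hf i t ht).continuousAt.continuousWithinAt
  set S := ⋃ i, Icc a b ∩ f i ⁻¹' Iic 0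
  have hS : IsCompact S :=
    isCompact_Icc.of_isClosed_subset
      (isClosed_iUnion_of_finite fun i =>
        (hcont i).preimage_isClosed_of_isClosed isClosed_Icc isClosed_Iic)
      (iUnion_subset fun _ => inter_subset_left)
  obtain ⟨τ, hτS, hτmin⟩ := hS.exists_isLeast ⟨t₁, mem_iUnion.2 ⟨i₁, ht₁, hi₁⟩⟩
  obtain ⟨i, hτ, hiτ : f i τ ≤ 0⟩ := mem_iUnion.1 hτS
  have haτ : a < τ := hτ.1.lt_of_ne (by rintro rfl; exact (ha i).not_ge hiτ)
  have hbefore : ∀ j, ∀ᶠ t in 𝓝[<] τ, 0 < f j t := by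
    intro j
    filter_upwards [Ioo_mem_nhdsLT haτ] with t ht
    by_contra! hj
    exact (hτmin (mem_iUnion.2 ⟨j, ⟨ht.1.le, ht.2.le.trans hτ.2⟩, hj⟩)).not_gt ht.2
  have hτnonneg : ∀ j, 0 ≤ f j τ := fun j =>
    ge_of_tendsto ((hf j τ hτ).continuousAt.tendsto.mono_left nhdsWithin_le_nhds)
      ((hbefore j).mono fun _ => le_of_lt)
  have hiτ0 : f i τ = 0 := le_antisymm hiτ (hτnonneg i)
  have hderiv_nonpos : f' i τ ≤ 0 := by
    refine le_of_tendsto ((hasDerivAt_iff_tendsto_slope.1 (hf i τ hτ)).mono_left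
      (nhdsLT_le_nhdsNE τ)) ?_
    filter_upwards [hbefore i, self_mem_nhdsWithin] with t ht htτ
    rw [slope_def_field, hiτ0, sub_zero]
    exact div_nonpos_of_nonneg_of_nonpos ht.le (by linarith [mem_Iio.1 htτ])
  exact (hzero τ ⟨haτ, hτ.2⟩ i hτnonneg hiτ0).not_ge hderiv_nonpos

/-- `TemporalReach R n x y`: `y` is reached from `x` by a path that, at step `i < n`, either stays
put or follows an edge of `R i`. -/
def TemporalReach {α : Type*} (R : ℕ → α → α → Prop) : ℕ → α → α → Prop
  | 0 => Eq
  | n + 1 => Comp (ReflGen (R 0)) (TemporalReach (fun i => R (i + 1)) n)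

section TemporalReach

variable {α : Type*}

theorem TemporalReach.refl (R : ℕ → α → α → Prop) (n : ℕ) (x : α) : TemporalReach R n x x := by
  induction n generalizing R with
  | zero => rfl
  | succ n ih => exact ⟨x, ReflGen.refl, ih _⟩

theorem Relation.ReflTransGen.mem_of_pred_closed {r : α → α → Prop} {a b : α}
    (hab : ReflTransGen r a b) {S : Set α} (hS : ∀ x y, r x y → y ∈ S → x ∈ S) (hb : b ∈ S) :
    a ∈ S := by
  induction hab using ReflTransGen.head_induction_on with
  | refl => exact hb
  | head hxy _ ih => exact hS _ _ hxy ih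

/-- Prepending a window to the reach sets of `p` and `q` either enlarges one of them or leaves
both closed under predecessors in that window, hence both contain its root. -/
theorem add_two_le_ncard_of_disjoint [Finite α] (n : ℕ) (R : ℕ → α → α → Prop)
    (hR : ∀ n, ∃ r, ∀ x, ReflTransGen (R n) r x) {p q : α}
    (hdisj : Disjoint {x | TemporalReach R n x p} {x | TemporalReach R n x q}) :
    n + 2 ≤ {x | TemporalReach R n x p}.ncard + {x | TemporalReach R n x q}.ncard := by
  induction n generalizing R with
  | zero => simp [TemporalReach]
  | succ n ih =>
    set R' : ℕ → α → α → Prop := fun i => R (i + 1)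
    have hsub : ∀ y, {x | TemporalReach R' n x y} ⊆ {x | TemporalReach R (n + 1) x y} :=
      fun _ x hx => ⟨x, ReflGen.refl, hx⟩
    obtain ⟨r, hr⟩ := hR 0
    have hroot : ∀ y, {x | TemporalReach R (n + 1) x y} ⊆ {x | TemporalReach R' n x y} →
        TemporalReach R (n + 1) r y := fun y hy =>
      (hr y).mem_of_pred_closed (S := {x | TemporalReach R (n + 1) x y})
        (fun _ z hxz hz => ⟨z, ReflGen.single hxz, hy hz⟩) (TemporalReach.refl R _ y)
    have hih := ih R' (fun i => hR (i + 1)) (hdisj.mono (hsub p) (hsub q))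
    by_cases hp : {x | TemporalReach R (n + 1) x p} ⊆ {x | TemporalReach R' n x p}
    · by_cases hq : {x | TemporalReach R (n + 1) x q} ⊆ {x | TemporalReach R' n x q}
      · exact (Set.disjoint_left.1 hdisj (hroot p hp) (hroot q hq)).elim
      · have := Set.ncard_lt_ncard ((hsub q).ssubset_of_not_subset hq)
        have := Set.ncard_le_ncard (hsub p)
        omega
    · have := Set.ncard_lt_ncard ((hsub p).ssubset_of_not_subset hp)
      have := Set.ncard_le_ncard (hsub q)
      omega

theorem exists_temporalReach_and_temporalReach [Finite α] (R : ℕ → α → α → Prop)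
    (hR : ∀ n, ∃ r, ∀ x, ReflTransGen (R n) r x) (p q : α) :
    ∃ k, TemporalReach R (Nat.card α) k p ∧ TemporalReach R (Nat.card α) k q := by
  by_contra! h
  have hdisj : Disjoint {x | TemporalReach R (Nat.card α) x p}
      {x | TemporalReach R (Nat.card α) x q} := Set.disjoint_left.2 fun k hp hq => h k hp hq
  have hgrow := add_two_le_ncard_of_disjoint _ R hR hdisj
  have hcard := Set.ncard_union_eq hdisj ▸ Set.ncard_le_card
    ({x | TemporalReach R (Nat.card α) x p} ∪ {x | TemporalReach R (Nat.card α) x q})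
  omega

end TemporalReach

section Solution

variable {ι : Type*} [Fintype ι] {L : ℝ → Matrix ι ι ℝ} {x : ℝ → ι → ℝ} {t0 M : ℝ}

/-- Apply the first-crossing lemma to `x t i + ε (t - t0 + 1)`: where one of these vanishes while
the others are nonnegative, `x t i` is the smallest entry of `x t`, so by the zero row sum
`∑ k, L t i k * x t k ≥ 0` and the derivative is at least `ε`. -/
theorem solution_nonneg (hL : ∀ t, t0 ≤ t → IsRateMatrix (L t))
    (hx : ∀ t, t0 ≤ t → ∀ i, HasDerivAt (fun τ => x τ i) (∑ k, L t i k * x t k) t)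
    (hx0 : ∀ i, 0 ≤ x t0 i) {t : ℝ} (ht : t0 ≤ t) (i : ι) : 0 ≤ x t i := by
  refine le_of_forall_pos_lt_add fun ε hε => ?_
  set ε' := ε / (t - t0 + 1)
  have hε' : 0 < ε' := div_pos hε (by linarith)
  have hpos := forall_pos_of_hasDerivAt_pos_of_eq_zero (a := t0) (b := t)
    (f := fun i τ => x τ i + ε' * (τ - t0 + 1)) (f' := fun i τ => ∑ k, L τ i k * x τ k + ε')
    (fun i τ hτ => by
      simpa using (hx τ hτ.1 i).fun_add
        ((((hasDerivAt_id τ).sub_const t0).add_const 1).const_mul ε'))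
    (fun i => by simpa using add_pos_of_nonneg_of_pos (hx0 i) hε')
    (fun τ hτ i hall hi => by
      have hmin : ∀ k, x τ i ≤ x τ k := fun k => by linarith [hall k]
      linarith [(hL τ hτ.1.le).sum_mul_nonneg_of_forall_le hmin])
    t ⟨ht, le_rfl⟩ i
  have hε'ε : ε' * (t - t0 + 1) = ε := div_mul_cancel₀ ε (by linarith)
  simpa [hε'ε] using hpos

theorem hasDerivAt_exp_mul_solution
    (hx : ∀ t, t0 ≤ t → ∀ i, HasDerivAt (fun τ => x τ i) (∑ k, L t i k * x t k) t)
    {t : ℝ} (ht : t0 ≤ t) (i : ι) :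
    HasDerivAt (fun τ => exp (M * τ) * x τ i)
      (exp (M * t) * (M * x t i + ∑ k, L t i k * x t k)) t := by
  have hexp : HasDerivAt (fun τ => exp (M * τ)) (exp (M * t) * M) t := by
    simpa using ((hasDerivAt_id t).const_mul M).exp
  exact (hexp.fun_mul (hx t ht i)).congr_deriv (by ring)

theorem monotoneOn_exp_mul_solution (hL : ∀ t, t0 ≤ t → IsRateMatrix (L t))
    (hM : ∀ t, t0 ≤ t → ∀ i, -M ≤ L t i i)
    (hx : ∀ t, t0 ≤ t → ∀ i, HasDerivAt (fun τ => x τ i) (∑ k, L t i k * x t k) t)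
    (hx0 : ∀ i, 0 ≤ x t0 i) (i : ι) :
    MonotoneOn (fun t => exp (M * t) * x t i) (Ici t0) := by
  have hderiv := fun t (ht : t ∈ Ici t0) => hasDerivAt_exp_mul_solution (M := M) hx ht i
  refine monotoneOn_of_hasDerivWithinAt_nonneg (convex_Ici t0)
    (fun t ht => (hderiv t ht).continuousAt.continuousWithinAt)
    (fun t ht => (hderiv t (interior_subset ht)).hasDerivWithinAt) fun t ht => ?_
  have ht : t0 ≤ t := interior_subset (s := Ici t0) ht
  exact mul_nonneg (exp_pos _).le ((hL t ht).add_sum_mul_nonneg (hM t ht i)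
    fun k => solution_nonneg hL hx hx0 ht k)

/-- Along an edge `a → b` of weight `∫ L b a > δ` over `[s, s + T]`, the weighted entry
`exp (M t) * x t b` grows at rate at least `L t b a * exp (M s) * x s a`. -/
theorem mul_exp_mul_le_of_lt_integral (hL : ∀ t, t0 ≤ t → IsRateMatrix (L t))
    (hM : ∀ t, t0 ≤ t → ∀ i, -M ≤ L t i i)
    (hx : ∀ t, t0 ≤ t → ∀ i, HasDerivAt (fun τ => x τ i) (∑ k, L t i k * x t k) t)
    (hx0 : ∀ i, 0 ≤ x t0 i) {s T δ : ℝ} (hs : t0 ≤ s) (hT : 0 ≤ T) (hδ : 0 < δ) {a b : ι}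
    (hab : δ < ∫ u in s..s + T, L u b a) :
    δ * (exp (M * s) * x s a) ≤ exp (M * (s + T)) * x (s + T) b := by
  have hsT : s ≤ s + T := by linarith
  have hne : a ≠ b := by
    rintro rfl
    have : 0 ≤ ∫ u in s..s + T, -L u a a := intervalIntegral.integral_nonneg hsT
      fun u hu => neg_nonneg.2 ((hL u (hs.trans hu.1)).diag_nonpos a)
    rw [intervalIntegral.integral_neg] at this
    linarith
  have hmono := monotoneOn_exp_mul_solution hL hM hx hx0 (M := M)
  have hint : IntervalIntegrable (fun u => L u b a) volume s (s + T) :=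
    intervalIntegral.intervalIntegrable_of_integral_ne_zero (hδ.trans hab).ne'
  set C := exp (M * s) * x s a
  have hderiv := fun u (hu : u ∈ Icc s (s + T)) =>
    hasDerivAt_exp_mul_solution (M := M) hx (hs.trans hu.1) b
  have hgrowth := intervalIntegral.integral_le_sub_of_hasDeriv_right_of_le hsT
    (fun u hu => (hderiv u hu).continuousAt.continuousWithinAt)
    (fun u hu => (hderiv u (Ioo_subset_Icc_self hu)).hasDerivWithinAt)
    (((intervalIntegrable_iff_integrableOn_Icc_of_le hsT).1 hint).mul_const C)
    fun u hu => by
      have hu' : t0 ≤ u := hs.trans hu.1.le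
      calc L u b a * C ≤ L u b a * (exp (M * u) * x u a) :=
            mul_le_mul_of_nonneg_left (hmono a hs hu' hu.1.le)
              ((hL u hu').nonneg_of_ne b a hne.symm)
        _ = exp (M * u) * (L u b a * x u a) := by ring
        _ ≤ exp (M * u) * (M * x u b + ∑ k, L u b k * x u k) :=
            mul_le_mul_of_nonneg_left ((hL u hu').mul_le_add_sum_mul (hM u hu' b)
              (fun k => solution_nonneg hL hx hx0 hu' k) hne) (exp_pos _).le
  rw [intervalIntegral.integral_mul_const] at hgrowth
  have hC : 0 ≤ C := mul_nonneg (exp_pos _).le (solution_nonneg hL hx hx0 hs a)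
  have hb : 0 ≤ exp (M * s) * x s b := mul_nonneg (exp_pos _).le (solution_nonneg hL hx hx0 hs b)
  nlinarith [mul_le_mul_of_nonneg_right hab.le hC]

theorem min_mul_exp_mul_le_of_reflGen (hL : ∀ t, t0 ≤ t → IsRateMatrix (L t))
    (hM : ∀ t, t0 ≤ t → ∀ i, -M ≤ L t i i)
    (hx : ∀ t, t0 ≤ t → ∀ i, HasDerivAt (fun τ => x τ i) (∑ k, L t i k * x t k) t)
    (hx0 : ∀ i, 0 ≤ x t0 i) {s T δ : ℝ} (hs : t0 ≤ s) (hT : 0 ≤ T) (hδ : 0 < δ) {a b : ι}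
    (hab : ReflGen (fun a b => δ < ∫ u in s..s + T, L u b a) a b) :
    min 1 δ * (exp (M * s) * x s a) ≤ exp (M * (s + T)) * x (s + T) b := by
  have hC : 0 ≤ exp (M * s) * x s a := mul_nonneg (exp_pos _).le (solution_nonneg hL hx hx0 hs a)
  cases hab with
  | refl =>
    exact (mul_le_of_le_one_left hC (min_le_left _ _)).trans
      (monotoneOn_exp_mul_solution hL hM hx hx0 a hs (hs.trans (by linarith)) (by linarith))
  | single hab =>
    exact (mul_le_mul_of_nonneg_right (min_le_right _ _) hC).trans
      (mul_exp_mul_le_of_lt_integral hL hM hx hx0 hs hT hδ hab)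


theorem pow_min_mul_exp_mul_le_of_temporalReach (hL : ∀ t, t0 ≤ t → IsRateMatrix (L t))
    (hM : ∀ t, t0 ≤ t → ∀ i, -M ≤ L t i i)
    (hx : ∀ t, t0 ≤ t → ∀ i, HasDerivAt (fun τ => x τ i) (∑ k, L t i k * x t k) t)
    (hx0 : ∀ i, 0 ≤ x t0 i) {T δ : ℝ} (hT : 0 ≤ T) (hδ : 0 < δ) {n : ℕ}
    {R : ℕ → ι → ι → Prop} {s : ℝ} (hs : t0 ≤ s)
    (hR : ∀ i a b, R i a b → δ < ∫ u in (s + i * T)..(s + i * T + T), L u b a) {k a : ι}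
    (hka : TemporalReach R n k a) :
    min 1 δ ^ n * (exp (M * s) * x s k) ≤ exp (M * (s + n * T)) * x (s + n * T) a := by
  induction n generalizing R s k with
  | zero =>
    obtain rfl : k = a := hka
    simp
  | succ n ih =>
    obtain ⟨z, hkz, hza⟩ := hka
    have hstep := min_mul_exp_mul_le_of_reflGen hL hM hx hx0 hs hT hδ
      (hkz.mono fun a b h => by simpa using hR 0 a b h)
    have hrest := ih (R := fun i => R (i + 1)) (hs.trans (by linarith : s ≤ s + T))
      (fun i a b h => by
        rw [show s + T + i * T = s + (i + 1 : ℕ) * T by push_cast; ring]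
        exact hR (i + 1) a b h) hza
    have hc : 0 ≤ min 1 δ ^ n := pow_nonneg (le_min zero_le_one hδ.le) n
    calc min 1 δ ^ (n + 1) * (exp (M * s) * x s k)
        = min 1 δ ^ n * (min 1 δ * (exp (M * s) * x s k)) := by ring
      _ ≤ min 1 δ ^ n * (exp (M * (s + T)) * x (s + T) z) := mul_le_mul_of_nonneg_left hstep hc
      _ ≤ _ := hrest
      _ = _ := by push_cast; ring_nf

theorem pow_min_mul_exp_le_of_temporalReach (hL : ∀ t, t0 ≤ t → IsRateMatrix (L t))
    (hM : ∀ t, t0 ≤ t → ∀ i, -M ≤ L t i i)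
    (hx : ∀ t, t0 ≤ t → ∀ i, HasDerivAt (fun τ => x τ i) (∑ k, L t i k * x t k) t)
    (hx0 : ∀ i, 0 ≤ x t0 i) {k : ι} (hxk : x t0 k = 1) {T δ : ℝ} (hT : 0 ≤ T) (hδ : 0 < δ)
    {n : ℕ} (R : ℕ → ι → ι → Prop)
    (hR : ∀ i a b, R i a b → δ < ∫ u in (t0 + i * T)..(t0 + i * T + T), L u b a) {a : ι}
    (hka : TemporalReach R n k a) :
    min 1 δ ^ n * exp (-(M * (n * T))) ≤ x (t0 + n * T) a := by
  have h := pow_min_mul_exp_mul_le_of_temporalReach hL hM hx hx0 hT hδ le_rfl hR hka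
  rw [hxk, mul_one] at h
  have hexp : exp (M * (t0 + n * T)) * exp (-(M * (n * T))) = exp (M * t0) := by
    rw [← exp_add]; ring_nf
  refine le_of_mul_le_mul_left ?_ (exp_pos (M * (t0 + n * T)))
  linear_combination h + min 1 δ ^ n * hexp

end Solution

theorem stmt_13_general (m : ℕ) (hm : 0 < m)
    (L : ℝ → Matrix (Fin m) (Fin m) ℝ) (M₁ : ℝ)
    (hoff : ∀ t, 0 ≤ t → ∀ i j, i ≠ j → 0 ≤ L t i j)
    (hdiag : ∀ t, 0 ≤ t → ∀ i, L t i i = -∑ j ∈ ({i}ᶜ : Finset (Fin m)), L t i j)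
    (hbdd : ∀ t, 0 ≤ t → ∀ i j, |L t i j| ≤ M₁)
    (V : ℝ → ℝ → Matrix (Fin m) (Fin m) ℝ)
    (hV0 : ∀ t0, 0 ≤ t0 → V t0 t0 = 1)
    (hVd : ∀ t0, 0 ≤ t0 → ∀ t ∈ Set.Ici t0, ∀ i j,
        HasDerivAt (fun τ => V τ t0 i j) (∑ k, L t i k * V t t0 k j) t)
    (δ T : ℝ) (hδ : 0 < δ) (hT : 0 < T)
    (hspan : ∀ t0, 0 ≤ t0 → ∃ r : Fin m, ∀ i : Fin m,
      Relation.ReflTransGen (fun a b => δ < ∫ τ in t0..(t0 + T), L τ b a) r i) :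
    ∃ δ₁ > (0:ℝ), ∃ T₁ > (0:ℝ), ∀ t0, 0 ≤ t0 →
      δ₁ < ⨅ i : Fin m, ⨅ j : Fin m,
        ∑ k, min (V (t0 + T₁) t0 i k) (V (t0 + T₁) t0 j k) := by
  have : Nonempty (Fin m) := ⟨⟨0, hm⟩⟩
  set c := min 1 δ ^ m * exp (-(M₁ * (m * T)))
  have hc : 0 < c := by positivity
  refine ⟨c / 2, half_pos hc, m * T, by positivity, fun t0 ht0 => ?_⟩
  have hL : ∀ t, t0 ≤ t → IsRateMatrix (L t) := fun t ht =>
    .of_diag_eq_neg_sum (hoff t (ht0.trans ht)) (hdiag t (ht0.trans ht))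
  have hLdiag : ∀ t, t0 ≤ t → ∀ i, -M₁ ≤ L t i i := fun t ht i =>
    (abs_le.1 (hbdd t (ht0.trans ht) i i)).1
  have hcol := fun k t (ht : t0 ≤ t) i => hVd t0 ht0 t ht i k
  have hcol0 : ∀ k i, 0 ≤ V t0 t0 i k := fun k i => hV0 t0 ht0 ▸ Matrix.zero_le_one_elem i k
  have hnonneg : ∀ i k, 0 ≤ V (t0 + m * T) t0 i k := fun i k =>
    solution_nonneg hL (hcol k) (hcol0 k) (le_add_of_nonneg_right (by positivity)) i
  set R : ℕ → Fin m → Fin m → Prop :=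
    fun n a b => δ < ∫ τ in (t0 + n * T)..(t0 + n * T + T), L τ b a
  have hentry : ∀ k i, TemporalReach R m k i → c ≤ V (t0 + m * T) t0 i k := fun k i =>
    pow_min_mul_exp_le_of_temporalReach hL hLdiag (hcol k) (hcol0 k) (by simp [hV0 t0 ht0])
      hT.le hδ R fun _ _ _ h => h
  have hpair : ∀ i j, c ≤ ∑ k, min (V (t0 + m * T) t0 i k) (V (t0 + m * T) t0 j k) := by
    intro i j
    obtain ⟨k, hki, hkj⟩ := exists_temporalReach_and_temporalReach R
      (fun n => hspan _ (by positivity)) i j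
    rw [Nat.card_fin] at hki hkj
    exact (le_min (hentry k i hki) (hentry k j hkj)).trans (Finset.single_le_sum
      (fun l _ => le_min (hnonneg i l) (hnonneg j l)) (Finset.mem_univ k))
  exact (half_lt_self hc).trans_le (le_ciInf fun i => le_ciInf fun j => hpair i j)

/-- Lemma 9: under Assumption A4, if for some `δ > 0`, `T > 0` the graph
`G([t0,t0+T],δ)` (edge from `j` to `i` iff `∫ l_ij > δ`) has a spanning tree for every
`t0 ≥ 0`, then there exist `δ₁ > 0` and `T₁ > 0` such that `V(t0+T₁,t0)` is
`δ₁`-scrambling for every `t0 ≥ 0`, i.e. `η(V(t0+T₁,t0)) > δ₁` where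
`η(V) = min_{i,j} Σ_k min(v_ik, v_jk)`. -/
theorem stmt_13 (m : ℕ) (hm : 0 < m)
    (L : ℝ → Matrix (Fin m) (Fin m) ℝ) (M₁ : ℝ) (hM₁ : 0 < M₁)
    (hmeas : ∀ i j, Measurable fun t => L t i j)
    (hoff : ∀ t, 0 ≤ t → ∀ i j, i ≠ j → 0 ≤ L t i j)
    (hdiag : ∀ t, 0 ≤ t → ∀ i, L t i i = -∑ j ∈ ({i}ᶜ : Finset (Fin m)), L t i j)
    (hbdd : ∀ t, 0 ≤ t → ∀ i j, |L t i j| ≤ M₁)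
    (V : ℝ → ℝ → Matrix (Fin m) (Fin m) ℝ)
    (hV0 : ∀ t0, 0 ≤ t0 → V t0 t0 = 1)
    (hVd : ∀ t0, 0 ≤ t0 → ∀ t ∈ Set.Ici t0, ∀ i j,
        HasDerivAt (fun τ => V τ t0 i j) (∑ k, L t i k * V t t0 k j) t)
    (δ T : ℝ) (hδ : 0 < δ) (hT : 0 < T)
    (hspan : ∀ t0, 0 ≤ t0 → ∃ r : Fin m, ∀ i : Fin m,
      Relation.ReflTransGen (fun a b => δ < ∫ τ in t0..(t0 + T), L τ b a) r i) :
    ∃ δ₁ > (0:ℝ), ∃ T₁ > (0:ℝ), ∀ t0, 0 ≤ t0 →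
      δ₁ < ⨅ i : Fin m, ⨅ j : Fin m,
        ∑ k, min (V (t0 + T₁) t0 i k) (V (t0 + T₁) t0 j k) :=
  stmt_13_general m hm L M₁ hoff hdiag hbdd V hV0 hVd δ T hδ hT hspan
end

section
/- Suppose Assumption A4 holds and let V(t,t0) be the solution matrix of u̇ = L(t)u. Let J ⊆ {1,…,m} be a nonempty proper subset, t0 ≥ 0, T > 0 and δ > 0, and suppose ∫_{t0}^{t0+T} l_ij(τ)dτ ≤ δ for all i ∈ J and j ∉ J. Then Σ_{i∈J, j∉J} V(t0+T, t0)_{ij} ≤ (m − #J)² · #J · e^{M₁(#J−1)T} · δ ≤ m³ e^{mM₁T} δ, where #J denotes the cardinality of J. -/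
/-!
Put `W t k = ∑_{j ∉ J} V(t, t0)_{kj}`. As the rows of `L` sum to zero, both `W` and `1 - W`
solve `u' = L u`, and a solution of this Metzler system that starts nonnegative stays
nonnegative (Grönwall for `∑ᵢ (min uᵢ 0)²`); hence `0 ≤ W ≤ 1`. Then `S = ∑_{i ∈ J} W_i`
obeys `S' ≤ M₁ (#J - 1) S + ∑_{i ∈ J, k ∉ J} l_ik`: the diagonal terms are nonpositive, the
couplings inside `J` are at most `M₁`, and those leaving `J` meet `W ≤ 1`. Integrating from
`S(t0) = 0` gives `S(t0 + T) ≤ e^{M₁ (#J - 1) T} #J (m - #J) δ`.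
-/

open Set Matrix MeasureTheory Real Asymptotics
open scoped Finset

theorem hasDerivAt_min_zero_sq (x : ℝ) :
    HasDerivAt (fun y : ℝ => min y 0 ^ 2) (2 * min x 0) x := by
  rcases lt_trichotomy x 0 with hx | rfl | hx
  · rw [min_eq_left hx.le]
    refine (hasDerivAt_pow 2 x).congr_of_eventuallyEq ?_ |>.congr_deriv (by ring)
    filter_upwards [Iio_mem_nhds hx] with y hy
    rw [min_eq_left (le_of_lt hy)]
  · rw [hasDerivAt_iff_isLittleO_nhds_zero]
    have hsq : (fun h : ℝ => min h 0 ^ 2) =O[nhds 0] fun h => h ^ 2 :=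
      IsBigO.of_bound 1 (Filter.Eventually.of_forall fun h => by
        rw [one_mul, norm_pow, norm_pow]
        refine pow_le_pow_left₀ (norm_nonneg _) ?_ 2
        rcases min_cases h 0 with ⟨h', _⟩ | ⟨h', _⟩ <;> simp [h'])
    simpa using hsq.trans_isLittleO (isLittleO_pow_id one_lt_two)
  · rw [min_eq_right hx.le, mul_zero]
    refine (hasDerivAt_const x (0 : ℝ)).congr_of_eventuallyEq ?_
    filter_upwards [Ioi_mem_nhds hx] with y (hy : 0 < y)
    simp [min_eq_right hy.le]

theorem le_exp_mul_mul_add_integral_of_deriv_le {S S' φ : ℝ → ℝ} {a t0 t1 : ℝ} (ha : 0 ≤ a)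
    (h01 : t0 ≤ t1) (hS : ∀ t ∈ Icc t0 t1, HasDerivAt S (S' t) t)
    (hφ : IntervalIntegrable φ volume t0 t1) (hφ0 : ∀ t ∈ Icc t0 t1, 0 ≤ φ t)
    (hle : ∀ t ∈ Icc t0 t1, S' t ≤ a * S t + φ t) :
    S t1 ≤ exp (a * (t1 - t0)) * (S t0 + ∫ t in t0..t1, φ t) := by
  set F : ℝ → ℝ := fun t => exp (a * (t0 - t)) * S t
  have hF : ∀ t ∈ Icc t0 t1, HasDerivAt F (exp (a * (t0 - t)) * (S' t - a * S t)) t := by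
    intro t ht
    have he : HasDerivAt (fun s => exp (a * (t0 - s))) (exp (a * (t0 - t)) * -a) t := by
      simpa using (((hasDerivAt_id t).const_sub t0).const_mul a).exp
    exact (he.mul (hS t ht)).congr_deriv (by ring)
  have hF' : ∀ t ∈ Icc t0 t1, exp (a * (t0 - t)) * (S' t - a * S t) ≤ φ t := fun t ht =>
    calc exp (a * (t0 - t)) * (S' t - a * S t) ≤ exp (a * (t0 - t)) * φ t := by
          gcongr
          linarith [hle t ht]
      _ ≤ φ t := mul_le_of_le_one_left (hφ0 t ht)
          (exp_le_one_iff.2 (mul_nonpos_of_nonneg_of_nonpos ha (by linarith [ht.1])))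
  have hFint : F t1 - F t0 ≤ ∫ t in t0..t1, φ t :=
    intervalIntegral.sub_le_integral_of_hasDeriv_right_of_le h01
      (fun t ht => (hF t ht).continuousAt.continuousWithinAt)
      (fun t ht => (hF t (Ioo_subset_Icc_self ht)).hasDerivWithinAt)
      ((intervalIntegrable_iff_integrableOn_Icc_of_le h01).1 hφ)
      (fun t ht => hF' t (Ioo_subset_Icc_self ht))
  calc S t1 = exp (a * (t1 - t0)) * F t1 := by
        simp only [F, ← mul_assoc, ← exp_add, show a * (t1 - t0) + a * (t0 - t1) = 0 by ring,
          exp_zero, one_mul]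
    _ ≤ exp (a * (t1 - t0)) * (S t0 + ∫ t in t0..t1, φ t) := by
        gcongr
        simp only [F, sub_self, mul_zero, exp_zero, one_mul] at hFint
        linarith

theorem two_mul_min_zero_mul_le {ι : Type*} {A : Matrix ι ι ℝ} {M : ℝ}
    (hoff : ∀ i j, i ≠ j → 0 ≤ A i j) (hbdd : ∀ i j, |A i j| ≤ M) (u : ι → ℝ) (i k : ι) :
    2 * min (u i) 0 * (A i k * u k) ≤ M * (min (u i) 0 ^ 2 + min (u k) 0 ^ 2) := by
  set a := min (u i) 0
  set b := min (u k) 0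
  have ha : a ≤ 0 := min_le_right _ _
  have hb : b ≤ 0 := min_le_right _ _
  have hab : A i k * (a * u k) ≤ A i k * (a * b) := by
    by_cases hik : i = k
    · subst hik
      rcases min_cases (u i) 0 with ⟨h, _⟩ | ⟨h, _⟩ <;> simp [a, b, h]
    · exact mul_le_mul_of_nonneg_left (mul_le_mul_of_nonpos_left (min_le_left _ _) ha)
        (hoff i k hik)
  have hA := abs_le.1 (hbdd i k)
  nlinarith [mul_nonneg_of_nonpos_of_nonpos ha hb, sq_nonneg (a - b), sq_nonneg (a + b)]

section

variable {ι : Type*} [Fintype ι]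

theorem sum_two_mul_min_zero_mul_mulVec_le {A : Matrix ι ι ℝ} {M : ℝ}
    (hoff : ∀ i j, i ≠ j → 0 ≤ A i j) (hbdd : ∀ i j, |A i j| ≤ M) (u : ι → ℝ) :
    ∑ i, 2 * min (u i) 0 * (A *ᵥ u) i ≤ 2 * Fintype.card ι * M * ∑ i, min (u i) 0 ^ 2 := by
  calc ∑ i, 2 * min (u i) 0 * (A *ᵥ u) i
      = ∑ i, ∑ k, 2 * min (u i) 0 * (A i k * u k) := by
        simp only [mulVec, dotProduct, Finset.mul_sum]
    _ ≤ ∑ i, ∑ k, M * (min (u i) 0 ^ 2 + min (u k) 0 ^ 2) :=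
        Finset.sum_le_sum fun i _ => Finset.sum_le_sum fun k _ =>
          two_mul_min_zero_mul_le hoff hbdd u i k
    _ = 2 * Fintype.card ι * M * ∑ i, min (u i) 0 ^ 2 := by
        simp only [mul_add, Finset.sum_add_distrib, Finset.sum_const, Finset.card_univ,
          nsmul_eq_mul, ← Finset.mul_sum]
        ring

theorem nonneg_of_hasDerivAt_mulVec {A : ℝ → Matrix ι ι ℝ} {u : ℝ → ι → ℝ} {t0 M : ℝ}
    (hoff : ∀ t ≥ t0, ∀ i j, i ≠ j → 0 ≤ A t i j) (hbdd : ∀ t ≥ t0, ∀ i j, |A t i j| ≤ M)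
    (hu : ∀ t ≥ t0, HasDerivAt u (A t *ᵥ u t) t) (h0 : 0 ≤ u t0) :
    ∀ t ≥ t0, 0 ≤ u t := by
  set f : ℝ → ℝ := fun t => ∑ i, min (u t i) 0 ^ 2
  have hf : ∀ t ≥ t0, HasDerivAt f (∑ i, 2 * min (u t i) 0 * (A t *ᵥ u t) i) t := fun t ht =>
    HasDerivAt.fun_sum fun i _ =>
      (hasDerivAt_min_zero_sq _).comp t (hasDerivAt_pi.1 (hu t ht) i)
  intro t ht i
  have hft : f t ≤ 0 := by
    have := le_gronwallBound_of_liminf_deriv_right_le (f := f) (δ := 0) (ε := 0)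
      (K := 2 * Fintype.card ι * M) (b := t)
      (fun s hs => (hf s hs.1).continuousAt.continuousWithinAt)
      (fun s hs _ hr => (hf s hs.1).hasDerivWithinAt.liminf_right_slope_le hr)
      (Finset.sum_eq_zero fun i _ => by simp [min_eq_right (show (0 : ℝ) ≤ u t0 i from h0 i)]).le
      (fun s hs => (sum_two_mul_min_zero_mul_mulVec_le (hoff s hs.1) (hbdd s hs.1) (u s)).trans
        (add_zero _).ge) t ⟨ht, le_rfl⟩
    rwa [gronwallBound_ε0_δ0] at this
  have hi : min (u t i) 0 ^ 2 = 0 :=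
    (Finset.sum_eq_zero_iff_of_nonneg (fun j _ => sq_nonneg _)).1
      (hft.antisymm (by positivity)) i (Finset.mem_univ i)
  exact min_eq_right_iff.1 (pow_eq_zero_iff two_ne_zero |>.1 hi)

theorem mem_Icc_of_hasDerivAt_mulVec {A : ℝ → Matrix ι ι ℝ} {w : ℝ → ι → ℝ}
    {t0 M : ℝ} (hoff : ∀ t ≥ t0, ∀ i j, i ≠ j → 0 ≤ A t i j)
    (hbdd : ∀ t ≥ t0, ∀ i j, |A t i j| ≤ M) (hrow : ∀ t ≥ t0, A t *ᵥ 1 = 0)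
    (hw : ∀ t ≥ t0, HasDerivAt w (A t *ᵥ w t) t) (h0 : w t0 ∈ Icc 0 1) :
    ∀ t ≥ t0, w t ∈ Icc 0 1 := by
  have hw' : ∀ t ≥ t0, HasDerivAt (fun s => 1 - w s) (A t *ᵥ (1 - w t)) t := fun t ht => by
    simpa [mulVec_sub, hrow t ht] using (hw t ht).const_sub 1
  exact fun t ht => ⟨nonneg_of_hasDerivAt_mulVec hoff hbdd hw h0.1 t ht,
    sub_nonneg.1 (nonneg_of_hasDerivAt_mulVec hoff hbdd hw' (sub_nonneg.2 h0.2) t ht)⟩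

theorem mulVec_one_eq_zero_of_diag_eq [DecidableEq ι] {A : Matrix ι ι ℝ}
    (h : ∀ i, A i i = -∑ j ∈ {i}ᶜ, A i j) : A *ᵥ 1 = 0 := funext fun i => by
  simp only [mulVec, dotProduct, Pi.one_apply, mul_one, Pi.zero_apply]
  rw [← Finset.sum_add_sum_compl {i}, Finset.sum_singleton, h i, neg_add_cancel]

theorem diag_nonpos_of_diag_eq [DecidableEq ι] {A : Matrix ι ι ℝ} {i : ι}
    (hoff : ∀ j, i ≠ j → 0 ≤ A i j) (h : A i i = -∑ j ∈ {i}ᶜ, A i j) : A i i ≤ 0 := by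
  rw [h, neg_nonpos]
  exact Finset.sum_nonneg fun j hj => hoff j (Ne.symm (by simpa using hj))

theorem mulVec_apply_le_of_mem [DecidableEq ι] {A : Matrix ι ι ℝ} {M : ℝ}
    (hoff : ∀ i j, i ≠ j → 0 ≤ A i j)
    (hdiag : ∀ i, A i i ≤ 0) (hbdd : ∀ i j, A i j ≤ M) {w : ι → ℝ} (hw0 : 0 ≤ w) (hw1 : w ≤ 1)
    {J : Finset ι} {i : ι} (hi : i ∈ J) :
    (A *ᵥ w) i ≤ M * (∑ k ∈ J, w k - w i) + ∑ k ∈ Jᶜ, A i k := by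
  have hin : ∑ k ∈ J, A i k * w k ≤ M * (∑ k ∈ J, w k - w i) := by
    rw [← Finset.add_sum_erase J _ hi, ← Finset.sum_erase_eq_sub hi, Finset.mul_sum]
    have hii : A i i * w i ≤ 0 := mul_nonpos_of_nonpos_of_nonneg (hdiag i) (hw0 i)
    have hrest : ∑ k ∈ J.erase i, A i k * w k ≤ ∑ k ∈ J.erase i, M * w k :=
      Finset.sum_le_sum fun k _ => mul_le_mul_of_nonneg_right (hbdd i k) (hw0 k)
    linarith
  have hout : ∑ k ∈ Jᶜ, A i k * w k ≤ ∑ k ∈ Jᶜ, A i k := by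
    refine Finset.sum_le_sum fun k hk => mul_le_of_le_one_right ?_ (hw1 k)
    exact hoff i k fun h => Finset.mem_compl.1 hk (h ▸ hi)
  rw [mulVec, dotProduct, ← Finset.sum_add_sum_compl J]
  linarith

theorem sum_mulVec_le [DecidableEq ι] {A : Matrix ι ι ℝ} {M : ℝ}
    (hoff : ∀ i j, i ≠ j → 0 ≤ A i j)
    (hdiag : ∀ i, A i i ≤ 0) (hbdd : ∀ i j, A i j ≤ M) {w : ι → ℝ} (hw0 : 0 ≤ w) (hw1 : w ≤ 1)
    (J : Finset ι) :
    ∑ i ∈ J, (A *ᵥ w) i ≤ M * (#J - 1) * ∑ i ∈ J, w i + ∑ i ∈ J, ∑ k ∈ Jᶜ, A i k :=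
  calc ∑ i ∈ J, (A *ᵥ w) i ≤ ∑ i ∈ J, (M * (∑ k ∈ J, w k - w i) + ∑ k ∈ Jᶜ, A i k) :=
        Finset.sum_le_sum fun i hi => mulVec_apply_le_of_mem hoff hdiag hbdd hw0 hw1 hi
    _ = M * (#J - 1) * ∑ i ∈ J, w i + ∑ i ∈ J, ∑ k ∈ Jᶜ, A i k := by
        rw [Finset.sum_add_distrib, ← Finset.mul_sum, Finset.sum_sub_distrib, Finset.sum_const,
          nsmul_eq_mul]
        ring

theorem sum_le_exp_mul_of_hasDerivAt_mulVec [DecidableEq ι] {A : ℝ → Matrix ι ι ℝ}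
    {w : ℝ → ι → ℝ} {t0 t1 M δ : ℝ} {J : Finset ι} (hJ : J.Nonempty) (hM : 0 ≤ M)
    (h01 : t0 ≤ t1) (hoff : ∀ t ∈ Icc t0 t1, ∀ i j, i ≠ j → 0 ≤ A t i j)
    (hdiag : ∀ t ∈ Icc t0 t1, ∀ i, A t i i ≤ 0) (hbdd : ∀ t ∈ Icc t0 t1, ∀ i j, A t i j ≤ M)
    (hint : ∀ i k, IntervalIntegrable (fun t => A t i k) volume t0 t1)
    (hflux : ∀ i ∈ J, ∀ k ∈ Jᶜ, ∫ t in t0..t1, A t i k ≤ δ)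
    (hw : ∀ t ∈ Icc t0 t1, HasDerivAt w (A t *ᵥ w t) t) (hw01 : ∀ t ∈ Icc t0 t1, w t ∈ Icc 0 1) :
    ∑ i ∈ J, w t1 i ≤ exp (M * (#J - 1) * (t1 - t0)) * (∑ i ∈ J, w t0 i + #J * #Jᶜ * δ) := by
  have hint' : ∀ i, IntervalIntegrable (fun t => ∑ k ∈ Jᶜ, A t i k) volume t0 t1 := fun i => by
    simpa only [Finset.sum_fn] using IntervalIntegrable.sum Jᶜ fun k _ => hint i k
  have hφ : IntervalIntegrable (fun t => ∑ i ∈ J, ∑ k ∈ Jᶜ, A t i k) volume t0 t1 := by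
    simpa only [Finset.sum_fn] using IntervalIntegrable.sum J fun i _ => hint' i
  have hφle : ∫ t in t0..t1, ∑ i ∈ J, ∑ k ∈ Jᶜ, A t i k ≤ #J * #Jᶜ * δ :=
    calc ∫ t in t0..t1, ∑ i ∈ J, ∑ k ∈ Jᶜ, A t i k
        = ∑ i ∈ J, ∑ k ∈ Jᶜ, ∫ t in t0..t1, A t i k := by
          rw [intervalIntegral.integral_finsetSum fun i _ => hint' i]
          exact Finset.sum_congr rfl fun i _ =>
            intervalIntegral.integral_finsetSum fun k _ => hint i k
      _ ≤ ∑ i ∈ J, ∑ k ∈ Jᶜ, δ := Finset.sum_le_sum fun i hi => Finset.sum_le_sum (hflux i hi)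
      _ = #J * #Jᶜ * δ := by simp only [Finset.sum_const, nsmul_eq_mul]; ring
  have hJ1 : (1 : ℝ) ≤ #J := by exact_mod_cast hJ.card_pos
  calc ∑ i ∈ J, w t1 i
      ≤ exp (M * (#J - 1) * (t1 - t0)) *
          (∑ i ∈ J, w t0 i + ∫ t in t0..t1, ∑ i ∈ J, ∑ k ∈ Jᶜ, A t i k) :=
        le_exp_mul_mul_add_integral_of_deriv_le (mul_nonneg hM (by linarith)) h01
          (fun t ht => HasDerivAt.fun_sum fun i _ => hasDerivAt_pi.1 (hw t ht) i) hφ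
          (fun t ht => Finset.sum_nonneg fun i hi => Finset.sum_nonneg fun k hk =>
            hoff t ht i k fun h => Finset.mem_compl.1 hk (h ▸ hi))
          (fun t ht => sum_mulVec_le (hoff t ht) (hdiag t ht) (hbdd t ht) (hw01 t ht).1
            (hw01 t ht).2 J)
    _ ≤ exp (M * (#J - 1) * (t1 - t0)) * (∑ i ∈ J, w t0 i + #J * #Jᶜ * δ) := by gcongr

theorem hasDerivAt_sum_col {A : Matrix ι ι ℝ} {V : ℝ → Matrix ι ι ℝ} {t : ℝ}
    (hV : ∀ i j, HasDerivAt (fun τ => V τ i j) (∑ k, A i k * V t k j) t) (s : Finset ι) :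
    HasDerivAt (fun τ k => ∑ j ∈ s, V τ k j) (A *ᵥ fun k => ∑ j ∈ s, V t k j) t :=
  hasDerivAt_pi.2 fun i => (HasDerivAt.fun_sum fun j _ => hV i j).congr_deriv (by
    simp only [mulVec, dotProduct, Finset.mul_sum]
    exact Finset.sum_comm)

theorem sum_sum_le_exp_mul_of_hasDerivAt [DecidableEq ι] {A : ℝ → Matrix ι ι ℝ}
    {V : ℝ → Matrix ι ι ℝ} {t0 t1 M δ : ℝ} {J : Finset ι} (hJ : J.Nonempty) (h01 : t0 ≤ t1)
    (hoff : ∀ t ≥ t0, ∀ i j, i ≠ j → 0 ≤ A t i j)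
    (hdiag : ∀ t ≥ t0, ∀ i, A t i i = -∑ j ∈ {i}ᶜ, A t i j)
    (hbdd : ∀ t ≥ t0, ∀ i j, |A t i j| ≤ M)
    (hint : ∀ i k, IntervalIntegrable (fun t => A t i k) volume t0 t1)
    (hflux : ∀ i ∈ J, ∀ k ∈ Jᶜ, ∫ t in t0..t1, A t i k ≤ δ) (hV0 : V t0 = 1)
    (hV : ∀ t ≥ t0, ∀ i j, HasDerivAt (fun τ => V τ i j) (∑ k, A t i k * V t k j) t) :
    ∑ i ∈ J, ∑ j ∈ Jᶜ, V t1 i j ≤ exp (M * (#J - 1) * (t1 - t0)) * (#J * #Jᶜ * δ) := by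
  set W : ℝ → ι → ℝ := fun t k => ∑ j ∈ Jᶜ, V t k j
  have hW : ∀ t ≥ t0, HasDerivAt W (A t *ᵥ W t) t := fun t ht => hasDerivAt_sum_col (hV t ht) Jᶜ
  have hW0 : W t0 = fun k => if k ∈ J then 0 else 1 := by
    ext k
    simp [W, hV0, one_apply]
  have hW01 : ∀ t ≥ t0, W t ∈ Icc 0 1 :=
    mem_Icc_of_hasDerivAt_mulVec hoff hbdd
      (fun t ht => mulVec_one_eq_zero_of_diag_eq (hdiag t ht)) hW
      ⟨fun k => by simp only [hW0]; split_ifs <;> norm_num,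
        fun k => by simp only [hW0]; split_ifs <;> norm_num⟩
  have hM : 0 ≤ M := (abs_nonneg _).trans (hbdd t0 le_rfl hJ.choose hJ.choose)
  have hS0 : ∑ i ∈ J, W t0 i = 0 := Finset.sum_eq_zero fun i hi => by simp [hW0, hi]
  have := sum_le_exp_mul_of_hasDerivAt_mulVec hJ hM h01 (fun t ht => hoff t ht.1)
    (fun t ht i => diag_nonpos_of_diag_eq (hoff t ht.1 i) (hdiag t ht.1 i))
    (fun t ht i j => (abs_le.1 (hbdd t ht.1 i j)).2) hint hflux (fun t ht => hW t ht.1)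
    (fun t ht => hW01 t ht.1)
  rwa [hS0, zero_add] at this

end

theorem sub_sq_mul_mul_exp_mul_le {m c M T δ : ℝ} (hc : 0 ≤ c) (hcm : c ≤ m) (hM : 0 ≤ M)
    (hT : 0 ≤ T) (hδ : 0 ≤ δ) :
    (m - c) ^ 2 * c * exp (M * (c - 1) * T) * δ ≤ m ^ 3 * exp (m * M * T) * δ := by
  have hm : 0 ≤ m := hc.trans hcm
  have hexp : exp (M * (c - 1) * T) ≤ exp (m * M * T) :=
    exp_le_exp.2 (mul_le_mul_of_nonneg_right (by nlinarith) hT)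
  calc (m - c) ^ 2 * c * exp (M * (c - 1) * T) * δ ≤ m ^ 2 * m * exp (m * M * T) * δ := by
        gcongr ?_ ^ 2 * ?_ * ?_ * _
        linarith
    _ = m ^ 3 * exp (m * M * T) * δ := by ring

theorem stmt_17_general (m : ℕ)
    (L : ℝ → Matrix (Fin m) (Fin m) ℝ) (M₁ : ℝ) (hM₁ : 0 < M₁)
    (hmeas : ∀ i j, Measurable fun t => L t i j)
    (hoff : ∀ t, 0 ≤ t → ∀ i j, i ≠ j → 0 ≤ L t i j)
    (hdiag : ∀ t, 0 ≤ t → ∀ i, L t i i = -∑ j ∈ ({i}ᶜ : Finset (Fin m)), L t i j)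
    (hbdd : ∀ t, 0 ≤ t → ∀ i j, |L t i j| ≤ M₁)
    (V : ℝ → ℝ → Matrix (Fin m) (Fin m) ℝ)
    (hV0 : ∀ t0, 0 ≤ t0 → V t0 t0 = 1)
    (hVd : ∀ t0, 0 ≤ t0 → ∀ t ∈ Set.Ici t0, ∀ i j,
        HasDerivAt (fun τ => V τ t0 i j) (∑ k, L t i k * V t t0 k j) t)
    (J : Finset (Fin m)) (hJne : J.Nonempty) (hJproper : J ≠ Finset.univ)
    (t0 T δ : ℝ) (ht0 : 0 ≤ t0) (hT : 0 < T) (hδ : 0 < δ)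
    (hint : ∀ i ∈ J, ∀ j ∈ Jᶜ, (∫ τ in t0..(t0 + T), L τ i j) ≤ δ) :
    (∑ i ∈ J, ∑ j ∈ Jᶜ, V (t0 + T) t0 i j)
        ≤ ((m : ℝ) - J.card) ^ 2 * J.card
            * Real.exp (M₁ * ((J.card : ℝ) - 1) * T) * δ ∧
      ((m : ℝ) - J.card) ^ 2 * J.card * Real.exp (M₁ * ((J.card : ℝ) - 1) * T) * δ
        ≤ (m : ℝ) ^ 3 * Real.exp ((m : ℝ) * M₁ * T) * δ := by
  have hJm : #J < m := by simpa using Finset.card_lt_card (Finset.ssubset_univ_iff.2 hJproper)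
  have hJc : (#Jᶜ : ℝ) = m - #J := by
    rw [Finset.card_compl, Fintype.card_fin, Nat.cast_sub hJm.le]
  have hJc1 : (1 : ℝ) ≤ m - #J := by
    have : (#J : ℝ) + 1 ≤ m := by exact_mod_cast hJm
    linarith
  have hLint : ∀ i k, IntervalIntegrable (fun τ => L τ i k) volume t0 (t0 + T) := fun i k =>
    (intervalIntegrable_const (c := M₁)).mono_fun (hmeas i k).aestronglyMeasurable <|
      ae_restrict_of_forall_mem measurableSet_uIoc fun τ hτ => by
        rw [uIoc_of_le (by linarith)] at hτ
        exact (hbdd τ (ht0.trans hτ.1.le) i k).trans (le_abs_self M₁)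
  have hS := sum_sum_le_exp_mul_of_hasDerivAt (V := fun τ => V τ t0) hJne
    (by linarith : t0 ≤ t0 + T)
    (fun t ht => hoff t (ht0.trans ht)) (fun t ht => hdiag t (ht0.trans ht))
    (fun t ht => hbdd t (ht0.trans ht)) hLint hint (hV0 t0 ht0) (hVd t0 ht0)
  rw [add_sub_cancel_left, hJc] at hS
  refine ⟨?_, sub_sq_mul_mul_exp_mul_le (by positivity) (by linarith) hM₁.le hT.le hδ.le⟩
  calc ∑ i ∈ J, ∑ j ∈ Jᶜ, V (t0 + T) t0 i j
      ≤ ((m : ℝ) - #J) * (#J * exp (M₁ * (#J - 1) * T) * δ) := by linarith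
    _ ≤ ((m : ℝ) - #J) ^ 2 * (#J * exp (M₁ * (#J - 1) * T) * δ) := by
        gcongr
        exact le_self_pow₀ hJc1 two_ne_zero
    _ = ((m : ℝ) - #J) ^ 2 * #J * exp (M₁ * (#J - 1) * T) * δ := by ring

/-- under Assumption A4, if all couplings from outside a nonempty
proper index set `J` into `J` integrate to at most `δ` over `[t0, t0+T]`, then the
total mass that the rows of `V(t0+T,t0)` indexed by `J` place outside `J` is at most
`(m−#J)²·#J·e^{M₁(#J−1)T}·δ ≤ m³ e^{mM₁T} δ`. -/
theorem stmt_17 (m : ℕ) (hm : 0 < m)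
    (L : ℝ → Matrix (Fin m) (Fin m) ℝ) (M₁ : ℝ) (hM₁ : 0 < M₁)
    (hmeas : ∀ i j, Measurable fun t => L t i j)
    (hoff : ∀ t, 0 ≤ t → ∀ i j, i ≠ j → 0 ≤ L t i j)
    (hdiag : ∀ t, 0 ≤ t → ∀ i, L t i i = -∑ j ∈ ({i}ᶜ : Finset (Fin m)), L t i j)
    (hbdd : ∀ t, 0 ≤ t → ∀ i j, |L t i j| ≤ M₁)
    (V : ℝ → ℝ → Matrix (Fin m) (Fin m) ℝ)
    (hV0 : ∀ t0, 0 ≤ t0 → V t0 t0 = 1)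
    (hVd : ∀ t0, 0 ≤ t0 → ∀ t ∈ Set.Ici t0, ∀ i j,
        HasDerivAt (fun τ => V τ t0 i j) (∑ k, L t i k * V t t0 k j) t)
    (J : Finset (Fin m)) (hJne : J.Nonempty) (hJproper : J ≠ Finset.univ)
    (t0 T δ : ℝ) (ht0 : 0 ≤ t0) (hT : 0 < T) (hδ : 0 < δ)
    (hint : ∀ i ∈ J, ∀ j ∈ Jᶜ, (∫ τ in t0..(t0 + T), L τ i j) ≤ δ) :
    (∑ i ∈ J, ∑ j ∈ Jᶜ, V (t0 + T) t0 i j)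
        ≤ ((m : ℝ) - J.card) ^ 2 * J.card
            * Real.exp (M₁ * ((J.card : ℝ) - 1) * T) * δ ∧
      ((m : ℝ) - J.card) ^ 2 * J.card * Real.exp (M₁ * ((J.card : ℝ) - 1) * T) * δ
        ≤ (m : ℝ) ^ 3 * Real.exp ((m : ℝ) * M₁ * T) * δ :=
  stmt_17_general m L M₁ hM₁ hmeas hoff hdiag hbdd V hV0 hVd J hJne hJproper t0 T δ ht0 hT hδ hint
end

section
/- Let G be a finite directed graph on the vertex set {1,…,m}. If there is no vertex r from which every vertex of G is reachable along directed edges (i.e., G has no spanning tree), then there exist two disjoint nonempty vertex sets J1 and J2 such that G has no edge from any vertex outside J1 into a vertex of J1, and no edge from any vertex outside J2 into a vertex of J2. -/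
/-! Pick a vertex `v` whose set of ancestors (vertices that reach it) has minimal size. Every
ancestor `w` of `v` has its ancestor set inside that of `v`, hence equal to it, so `w` is reached
by `v` as well. Without a spanning tree some vertex `i` is not reached by `v`; the ancestor sets of
`v` and `i` are closed, and a common ancestor `w` would give a path `v → w → i`. -/

open Relation

variable {α : Type*} (E : α → α → Prop)

def ancestorSet (v : α) : Set α := {u | ReflTransGen E u v}

variable {E}

theorem mem_ancestorSet_self (v : α) : v ∈ ancestorSet E v := ReflTransGen.refl

theorem ancestorSet_subset_of_mem {v w : α} (hw : w ∈ ancestorSet E v) :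
    ancestorSet E w ⊆ ancestorSet E v :=
  fun _ hu => hu.trans hw

theorem ancestorSet_no_incoming (v : α) :
    ¬ ∃ j i, j ∉ ancestorSet E v ∧ i ∈ ancestorSet E v ∧ E j i := by
  rintro ⟨j, i, hj, hi, hji⟩
  exact hj (hi.head hji)

theorem exists_forall_reflTransGen_of_reflTransGen [Finite α] [Nonempty α] :
    ∃ v, ∀ w, ReflTransGen E w v → ReflTransGen E v w := by
  obtain ⟨v, hmin⟩ := Finite.exists_min fun v => (ancestorSet E v).ncard
  refine ⟨v, fun w hw => ?_⟩
  have hEq : ancestorSet E w = ancestorSet E v :=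
    Set.eq_of_subset_of_ncard_le (ancestorSet_subset_of_mem hw) (hmin w) (Set.toFinite _)
  show v ∈ ancestorSet E w
  exact hEq ▸ mem_ancestorSet_self v

theorem disjoint_ancestorSet {v i : α} (hv : ∀ w, ReflTransGen E w v → ReflTransGen E v w)
    (hi : ¬ ReflTransGen E v i) : Disjoint (ancestorSet E v) (ancestorSet E i) :=
  Set.disjoint_left.mpr fun w hwv hwi => hi ((hv w hwv).trans hwi)

/-- If a finite directed graph on `{1,…,m}` has no spanning tree (no vertex
from which every vertex is reachable), then there are two disjoint nonempty closed vertex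
sets `J1`, `J2` (no incoming edges from outside). -/
theorem stmt_19 (m : ℕ) (hm : 0 < m) (E : Fin m → Fin m → Prop)
    (h : ¬ ∃ r : Fin m, ∀ i : Fin m, Relation.ReflTransGen E r i) :
    ∃ J1 J2 : Set (Fin m), J1.Nonempty ∧ J2.Nonempty ∧ Disjoint J1 J2 ∧
      (¬ ∃ j i, j ∉ J1 ∧ i ∈ J1 ∧ E j i) ∧
      (¬ ∃ j i, j ∉ J2 ∧ i ∈ J2 ∧ E j i) := by
  have : Nonempty (Fin m) := ⟨⟨0, hm⟩⟩
  obtain ⟨v, hv⟩ := exists_forall_reflTransGen_of_reflTransGen (E := E)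
  obtain ⟨i, hi⟩ := not_forall.mp (not_exists.mp h v)
  exact ⟨ancestorSet E v, ancestorSet E i,
    ⟨v, mem_ancestorSet_self v⟩, ⟨i, mem_ancestorSet_self i⟩,
    disjoint_ancestorSet hv hi, ancestorSet_no_incoming v, ancestorSet_no_incoming i⟩
end
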